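/- arXiv:1707.00812 — 9 statements merged into one kernel-verified Lean document; each statement's English description precedes it below -/
import Mathlib

section
/- Let $X \subseteq \mathbb{R}^m$ and $Y \subseteq \mathbb{R}^n$ be nonempty convex compact sets, let $f : \mathbb{R}^n \times \mathbb{R}^m \to \mathbb{R}$ be convex and differentiable on $Y \times X$, and define the value function $\mathcal{Q}(x) = \inf_{y \in Y} f(y,x)$. Fix $\bar x \in X$ and let $\hat y \in Y$ satisfy $\mathcal{Q}(\bar x) \ge f(\hat y, \bar x) - \varepsilon$. Set $\eta = \max_{y \in Y} \langle \nabla_y f(\hat y, \bar x), \hat y - y \rangle$ and define the affine function $\mathcal{C}(x) = f(\hat y, \bar x) - \eta + \langle \nabla_x f(\hat y, \bar x), x - \bar x \rangle$. Then $\mathcal{Q}(x) \ge \mathcal{C}(x)$ for all $x \in X$, and $\mathcal{Q}(\bar x) - \mathcal{C}(\bar x) \le \eta$. -/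
/-!
Convexity of `f` on `Y × X` gives the gradient inequality at `(ŷ, x̄)`:
`f (y, x) ≥ f (ŷ, x̄) + ⟪∇_y f, y - ŷ⟫ + ⟪∇_x f, x - x̄⟫`, and by the definition of `η` the
`y`-term is at least `-η` for every `y ∈ Y`. The right-hand side is then `C x`, independent of `y`,
so taking the infimum over `Y` gives `Q ≥ C`. At `x̄` we have `C x̄ = f (ŷ, x̄) - η ≥ Q x̄ - η`.
-/

open Set
open scoped RealInnerProductSpace

section GradientInequality

variable {E : Type*} [NormedAddCommGroup E] [NormedSpace ℝ E]
  {s : Set E} {f : E → ℝ} {f' : E →L[ℝ] ℝ} {p q : E}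

theorem ConvexOn.add_fderiv_sub_le (hf : ConvexOn ℝ s f) (hp : p ∈ s) (hq : q ∈ s)
    (hd : HasFDerivAt f f' p) : f p + f' (q - p) ≤ f q := by
  set A : ℝ →ᵃ[ℝ] E := AffineMap.lineMap p q
  have hA0 : A 0 = p := AffineMap.lineMap_apply_zero p q
  have hA1 : A 1 = q := AffineMap.lineMap_apply_one p q
  have hgd : HasDerivAt (f ∘ A) (f' (q - p)) 0 :=
    (hA0 ▸ hd).comp_hasDerivAt 0 AffineMap.hasDerivAt_lineMap
  have hslope := (hf.comp_affineMap A).le_slope_of_hasDerivAt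
    (by simpa [mem_preimage, hA0] using hp) (by simpa [mem_preimage, hA1] using hq) one_pos hgd
  simp only [slope_def_field, Function.comp, hA0, hA1, sub_zero, div_one] at hslope
  linarith

end GradientInequality

section ProductCut

variable {E F : Type*} [NormedAddCommGroup E] [InnerProductSpace ℝ E]
  [NormedAddCommGroup F] [InnerProductSpace ℝ F]

theorem ConvexOn.sub_add_inner_le_of_inner_le {Y : Set E} {X : Set F} {f : E × F → ℝ}
    {D : E × F →L[ℝ] ℝ} {gy : E} {gx : F} {y₀ y : E} {x₀ x : F} {η : ℝ}
    (hf : ConvexOn ℝ (Y ×ˢ X) f) (hy₀ : y₀ ∈ Y) (hx₀ : x₀ ∈ X)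
    (hd : HasFDerivAt f D (y₀, x₀)) (hD : ∀ v, D v = ⟪gy, v.1⟫ + ⟪gx, v.2⟫)
    (hy : y ∈ Y) (hx : x ∈ X) (hη : ⟪gy, y₀ - y⟫ ≤ η) :
    f (y₀, x₀) - η + ⟪gx, x - x₀⟫ ≤ f (y, x) := by
  have hgrad := hf.add_fderiv_sub_le (mk_mem_prod hy₀ hx₀) (mk_mem_prod hy hx) hd
  have hflip : ⟪gy, y - y₀⟫ = -⟪gy, y₀ - y⟫ := by
    rw [← inner_neg_right, neg_sub]
  rw [hD, Prod.fst_sub, Prod.snd_sub, hflip] at hgrad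
  linarith

end ProductCut

theorem stmt_0_general {n m : ℕ}
    (X : Set (EuclideanSpace ℝ (Fin m))) (Y : Set (EuclideanSpace ℝ (Fin n)))
    (hYne : Y.Nonempty)
    (f : EuclideanSpace ℝ (Fin n) × EuclideanSpace ℝ (Fin m) → ℝ)
    -- partial gradients of `f` in `y` and in `x`, and joint differentiability on `Y ×ˢ X`
    (Gy : EuclideanSpace ℝ (Fin n) × EuclideanSpace ℝ (Fin m) → EuclideanSpace ℝ (Fin n))
    (Gx : EuclideanSpace ℝ (Fin n) × EuclideanSpace ℝ (Fin m) → EuclideanSpace ℝ (Fin m))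
    (D : EuclideanSpace ℝ (Fin n) × EuclideanSpace ℝ (Fin m) →
         EuclideanSpace ℝ (Fin n) × EuclideanSpace ℝ (Fin m) →L[ℝ] ℝ)
    (hconv : ConvexOn ℝ (Y ×ˢ X) f)
    (hdiff : ∀ p ∈ Y ×ˢ X, HasFDerivAt f (D p) p)
    (hgrad : ∀ p ∈ Y ×ˢ X, ∀ v, D p v = ⟪Gy p, v.1⟫ + ⟪Gx p, v.2⟫)
    (Q : EuclideanSpace ℝ (Fin m) → ℝ)
    (hQ : ∀ x ∈ X, Q x = sInf ((fun y => f (y, x)) '' Y))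
    (xbar : EuclideanSpace ℝ (Fin m)) (hxbar : xbar ∈ X)
    (yhat : EuclideanSpace ℝ (Fin n)) (hyhat : yhat ∈ Y)
    (η : ℝ)
    (hη : IsGreatest ((fun y => ⟪Gy (yhat, xbar), yhat - y⟫) '' Y) η)
    (C : EuclideanSpace ℝ (Fin m) → ℝ)
    (hC : ∀ x, C x = f (yhat, xbar) - η + ⟪Gx (yhat, xbar), x - xbar⟫) :
    (∀ x ∈ X, Q x ≥ C x) ∧ Q xbar - C xbar ≤ η := by
  have hp : (yhat, xbar) ∈ Y ×ˢ X := mk_mem_prod hyhat hxbar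
  have hCle : ∀ x ∈ X, ∀ b ∈ (fun y => f (y, x)) '' Y, C x ≤ b := by
    rintro x hx _ ⟨y, hy, rfl⟩
    exact hC x ▸ hconv.sub_add_inner_le_of_inner_le hyhat hxbar (hdiff _ hp) (hgrad _ hp)
      hy hx (hη.2 ⟨y, hy, rfl⟩)
  have hQle : Q xbar ≤ f (yhat, xbar) :=
    hQ xbar hxbar ▸ csInf_le ⟨C xbar, hCle xbar hxbar⟩ ⟨yhat, hyhat, rfl⟩
  have hCbar : C xbar = f (yhat, xbar) - η := by simp [hC]
  exact ⟨fun x hx => hQ x hx ▸ le_csInf (hYne.image _) (hCle x hx), by linarith⟩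

/-- Inexact cut for the value function of a convex problem with fixed feasible set
(Proposition `fixedprop1`). -/
theorem stmt_0 {n m : ℕ}
    (X : Set (EuclideanSpace ℝ (Fin m))) (Y : Set (EuclideanSpace ℝ (Fin n)))
    (hXne : X.Nonempty) (hXcv : Convex ℝ X) (hXcp : IsCompact X)
    (hYne : Y.Nonempty) (hYcv : Convex ℝ Y) (hYcp : IsCompact Y)
    (f : EuclideanSpace ℝ (Fin n) × EuclideanSpace ℝ (Fin m) → ℝ)
    -- partial gradients of `f` in `y` and in `x`, and joint differentiability on `Y ×ˢ X`
    (Gy : EuclideanSpace ℝ (Fin n) × EuclideanSpace ℝ (Fin m) → EuclideanSpace ℝ (Fin n))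
    (Gx : EuclideanSpace ℝ (Fin n) × EuclideanSpace ℝ (Fin m) → EuclideanSpace ℝ (Fin m))
    (D : EuclideanSpace ℝ (Fin n) × EuclideanSpace ℝ (Fin m) →
         EuclideanSpace ℝ (Fin n) × EuclideanSpace ℝ (Fin m) →L[ℝ] ℝ)
    (hconv : ConvexOn ℝ (Y ×ˢ X) f)
    (hdiff : ∀ p ∈ Y ×ˢ X, HasFDerivAt f (D p) p)
    (hgrad : ∀ p ∈ Y ×ˢ X, ∀ v, D p v = ⟪Gy p, v.1⟫ + ⟪Gx p, v.2⟫)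
    (Q : EuclideanSpace ℝ (Fin m) → ℝ)
    (hQ : ∀ x ∈ X, Q x = sInf ((fun y => f (y, x)) '' Y))
    (xbar : EuclideanSpace ℝ (Fin m)) (hxbar : xbar ∈ X)
    (ε : ℝ) (hε : 0 ≤ ε)
    (yhat : EuclideanSpace ℝ (Fin n)) (hyhat : yhat ∈ Y)
    (hepsopt : Q xbar ≥ f (yhat, xbar) - ε)
    (η : ℝ)
    (hη : IsGreatest ((fun y => ⟪Gy (yhat, xbar), yhat - y⟫) '' Y) η)
    (C : EuclideanSpace ℝ (Fin m) → ℝ)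
    (hC : ∀ x, C x = f (yhat, xbar) - η + ⟪Gx (yhat, xbar), x - xbar⟫) :
    (∀ x ∈ X, Q x ≥ C x) ∧ Q xbar - C xbar ≤ η :=
  stmt_0_general X Y hYne f Gy Gx D hconv hdiff hgrad Q hQ xbar hxbar yhat hyhat η hη C hC
end

section
/- Let $Y \subseteq \mathbb{R}^n$ be a nonempty convex compact set, $\bar x \in X$ with $X \subseteq \mathbb{R}^m$ convex compact, and $f$ convex and differentiable on $Y \times X$ with $y \mapsto \nabla_y f(y,x)$ Lipschitz on $Y$ with constant $M_1$ uniformly in $x \in X$. Let $\hat y \in Y$ be $\varepsilon$-optimal for $\mathcal{Q}(\bar x) = \inf_{y \in Y} f(y, \bar x)$, set $\ell = \max_{y\in Y}\langle \nabla_y f(\hat y, \bar x), \hat y - y\rangle$ and $D = \mathrm{Diam}(Y)$. Then $\mathcal{Q}(\bar x) \le f(\hat y, \bar x) - \frac{\ell^2}{2 M_1 D^2}$ if $\ell \le M_1 D^2$, and $\mathcal{Q}(\bar x) \le f(\hat y, \bar x) - \frac{\ell}{2}$ otherwise. -/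
open Set
open scoped RealInnerProductSpace

/-! The descent lemma: a function whose gradient is `L`-Lipschitz on a convex set lies below its
linearization plus `L/2 ‖y - x‖²` there. Applied to `f(·, x̄)` on the segment from `ŷ` towards a
maximizer `y*` of `⟪∇_y f(ŷ, x̄), ŷ - y⟫`, it gives `Q(x̄) ≤ f(ŷ, x̄) - ℓ t + M₁ D² t² / 2` for all
`t ∈ [0, 1]`; take `t = ℓ / (M₁ D²)` when this is at most `1`, and `t = 1` otherwise. -/

section Descent

variable {E : Type*} [NormedAddCommGroup E] [InnerProductSpace ℝ E] [CompleteSpace E]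

theorem HasGradientAt.hasDerivAt_comp_add_smul {f : E → ℝ} {g x u : E} {t : ℝ}
    (hf : HasGradientAt f g (x + t • u)) :
    HasDerivAt (fun s : ℝ => f (x + s • u)) ⟪g, u⟫ t := by
  have hline : HasDerivAt (fun s : ℝ => x + s • u) u t := by
    simpa using ((hasDerivAt_id t).smul_const u).const_add x
  exact hf.hasFDerivAt.comp_hasDerivAt t hline

theorem Convex.le_add_inner_add_sq_of_hasGradientAt {f : E → ℝ} {g : E → E} {s : Set E}
    {L : ℝ} {x y : E} (hs : Convex ℝ s) (hx : x ∈ s) (hy : y ∈ s)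
    (hf : ∀ z ∈ s, HasGradientAt f (g z) z)
    (hg : ∀ z ∈ s, ‖g z - g x‖ ≤ L * ‖z - x‖) :
    f y ≤ f x + ⟪g x, y - x⟫ + L / 2 * ‖y - x‖ ^ 2 := by
  set u := y - x
  have hseg : ∀ t ∈ Icc (0 : ℝ) 1, x + t • u ∈ s := fun t ht => hs.add_smul_sub_mem hx hy ht
  set ψ : ℝ → ℝ := fun t => f (x + t • u) - t * ⟪g x, u⟫ - L / 2 * t ^ 2 * ‖u‖ ^ 2
  have hψ : ∀ t ∈ Icc (0 : ℝ) 1,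
      HasDerivAt ψ (⟪g (x + t • u), u⟫ - ⟪g x, u⟫ - L * t * ‖u‖ ^ 2) t := by
    intro t ht
    refine ((((hf _ (hseg t ht)).hasDerivAt_comp_add_smul).sub
      ((hasDerivAt_id t).mul_const ⟪g x, u⟫)).sub
      (((hasDerivAt_pow 2 t).const_mul (L / 2)).mul_const (‖u‖ ^ 2))).congr_deriv ?_
    ring
  obtain ⟨c, hc, hslope⟩ := exists_hasDerivAt_eq_slope ψ _ zero_lt_one
    (fun t ht => (hψ t ht).continuousAt.continuousWithinAt)
    (fun t ht => hψ t (Ioo_subset_Icc_self ht))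
  have hstep : ‖x + c • u - x‖ = c * ‖u‖ := by
    rw [add_sub_cancel_left, norm_smul, Real.norm_of_nonneg hc.1.le]
  have hderiv_nonpos : ⟪g (x + c • u), u⟫ - ⟪g x, u⟫ - L * c * ‖u‖ ^ 2 ≤ 0 := by
    have hlip := hg _ (hseg c (Ioo_subset_Icc_self hc))
    rw [hstep] at hlip
    calc ⟪g (x + c • u), u⟫ - ⟪g x, u⟫ - L * c * ‖u‖ ^ 2
        = ⟪g (x + c • u) - g x, u⟫ - L * c * ‖u‖ ^ 2 := by rw [inner_sub_left]
      _ ≤ ‖g (x + c • u) - g x‖ * ‖u‖ - L * c * ‖u‖ ^ 2 := by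
        gcongr; exact real_inner_le_norm _ _
      _ ≤ L * (c * ‖u‖) * ‖u‖ - L * c * ‖u‖ ^ 2 := by gcongr
      _ = 0 := by ring
  have h0 : ψ 0 = f x := by simp [ψ]
  have h1 : ψ 1 = f y - ⟪g x, y - x⟫ - L / 2 * ‖y - x‖ ^ 2 := by simp [ψ, u]
  rw [hslope, h0, h1] at hderiv_nonpos
  linarith

end Descent

theorem HasFDerivAt.hasGradientAt_fst {E F : Type*} [NormedAddCommGroup E] [InnerProductSpace ℝ E]
    [CompleteSpace E] [NormedAddCommGroup F] [InnerProductSpace ℝ F]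
    {f : E × F → ℝ} {D : E × F →L[ℝ] ℝ} {y : E} {x : F} {a : E} {b : F}
    (hf : HasFDerivAt f D (y, x)) (hD : ∀ v, D v = ⟪a, v.1⟫ + ⟪b, v.2⟫) :
    HasGradientAt (fun y' => f (y', x)) a y := by
  refine (hf.comp y (hasFDerivAt_prodMk_left y x)).congr_fderiv ?_
  ext v
  simp [hD]

theorem le_sub_sq_div_of_forall_le_quadratic {q a ℓ K : ℝ} (hℓ : 0 ≤ ℓ) (hℓK : ℓ ≤ K)
    (h : ∀ t ∈ Icc (0 : ℝ) 1, q ≤ a - ℓ * t + K / 2 * t ^ 2) :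
    q ≤ a - ℓ ^ 2 / (2 * K) := by
  -- for `K = 0` also `ℓ = 0`, and the bound is `q ≤ a` since `0 / 0 = 0`
  rcases (hℓ.trans hℓK).eq_or_lt with rfl | hK
  · simpa [le_antisymm hℓK hℓ] using h 0 (left_mem_Icc.2 zero_le_one)
  · convert h (ℓ / K) ⟨div_nonneg hℓ hK.le, (div_le_one hK).2 hℓK⟩ using 1
    field_simp
    ring

theorem stmt_1_general {n m : ℕ}
    (X : Set (EuclideanSpace ℝ (Fin m))) (Y : Set (EuclideanSpace ℝ (Fin n)))
    (hYcv : Convex ℝ Y) (hYcp : IsCompact Y)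
    (f : EuclideanSpace ℝ (Fin n) × EuclideanSpace ℝ (Fin m) → ℝ)
    (Gy : EuclideanSpace ℝ (Fin n) × EuclideanSpace ℝ (Fin m) → EuclideanSpace ℝ (Fin n))
    (Gx : EuclideanSpace ℝ (Fin n) × EuclideanSpace ℝ (Fin m) → EuclideanSpace ℝ (Fin m))
    (D : EuclideanSpace ℝ (Fin n) × EuclideanSpace ℝ (Fin m) →
         EuclideanSpace ℝ (Fin n) × EuclideanSpace ℝ (Fin m) →L[ℝ] ℝ)
    (hdiff : ∀ p ∈ Y ×ˢ X, HasFDerivAt f (D p) p)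
    (hgrad : ∀ p ∈ Y ×ˢ X, ∀ v, D p v = ⟪Gy p, v.1⟫ + ⟪Gx p, v.2⟫)
    (M₁ : ℝ) (hM₁ : 0 < M₁)
    (hLip : ∀ x ∈ X, ∀ y₁ ∈ Y, ∀ y₂ ∈ Y,
      ‖Gy (y₂, x) - Gy (y₁, x)‖ ≤ M₁ * ‖y₂ - y₁‖)
    (Q : EuclideanSpace ℝ (Fin m) → ℝ)
    (hQ : ∀ x ∈ X, Q x = sInf ((fun y => f (y, x)) '' Y))
    (xbar : EuclideanSpace ℝ (Fin m)) (hxbar : xbar ∈ X)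
    (yhat : EuclideanSpace ℝ (Fin n)) (hyhat : yhat ∈ Y)
    (ℓ : ℝ)
    (hℓ : IsGreatest ((fun y => ⟪Gy (yhat, xbar), yhat - y⟫) '' Y) ℓ) :
    (ℓ ≤ M₁ * (Metric.diam Y) ^ 2 →
        Q xbar ≤ f (yhat, xbar) - ℓ ^ 2 / (2 * M₁ * (Metric.diam Y) ^ 2)) ∧
    (M₁ * (Metric.diam Y) ^ 2 < ℓ →
        Q xbar ≤ f (yhat, xbar) - ℓ / 2) := by
  obtain ⟨ystar, hystar, hℓ_eq⟩ := hℓ.1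
  have hℓ0 : 0 ≤ ℓ := hℓ.2 ⟨yhat, hyhat, by simp⟩
  have hgradY : ∀ y ∈ Y, HasGradientAt (fun y => f (y, xbar)) (Gy (y, xbar)) y :=
    fun y hy => (hdiff _ ⟨hy, hxbar⟩).hasGradientAt_fst (hgrad _ ⟨hy, hxbar⟩)
  have hQle : ∀ y ∈ Y, Q xbar ≤ f (y, xbar) := fun y hy => by
    rw [hQ xbar hxbar]
    exact csInf_le (hYcp.image_of_continuousOn fun z hz =>
      (hgradY z hz).continuousAt.continuousWithinAt).bddBelow ⟨y, hy, rfl⟩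
  have hdiam : ‖ystar - yhat‖ ≤ Metric.diam Y := by
    simpa [dist_eq_norm] using Metric.dist_le_diam_of_mem hYcp.isBounded hystar hyhat
  have hmodel : ∀ t ∈ Icc (0 : ℝ) 1,
      Q xbar ≤ f (yhat, xbar) - ℓ * t + M₁ * Metric.diam Y ^ 2 / 2 * t ^ 2 := by
    intro t ht
    have hdesc := hYcv.le_add_inner_add_sq_of_hasGradientAt hyhat
      (hYcv.add_smul_sub_mem hyhat hystar ht) hgradY (fun z hz => hLip xbar hxbar yhat hyhat z hz)
    have hinner : ⟪Gy (yhat, xbar), ystar - yhat⟫ = -ℓ := by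
      rw [← hℓ_eq, ← inner_neg_right, neg_sub]
    rw [add_sub_cancel_left, inner_smul_right, hinner, norm_smul, Real.norm_of_nonneg ht.1] at hdesc
    have hquad : M₁ / 2 * (t * ‖ystar - yhat‖) ^ 2 ≤ M₁ * Metric.diam Y ^ 2 / 2 * t ^ 2 := by
      calc M₁ / 2 * (t * ‖ystar - yhat‖) ^ 2 = M₁ / 2 * t ^ 2 * ‖ystar - yhat‖ ^ 2 := by ring
        _ ≤ M₁ / 2 * t ^ 2 * Metric.diam Y ^ 2 := by gcongr
        _ = M₁ * Metric.diam Y ^ 2 / 2 * t ^ 2 := by ring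
    linarith [hQle _ (hYcv.add_smul_sub_mem hyhat hystar ht)]
  refine ⟨fun hsmall => ?_, fun hlarge => ?_⟩
  · simpa only [mul_assoc] using le_sub_sq_div_of_forall_le_quadratic hℓ0 hsmall hmodel
  · linarith [hmodel 1 (right_mem_Icc.2 zero_le_one)]

/-- Refined bound on the inexactness of the cut for a value function with fixed
feasible set under Lipschitz continuity of `∇_y f` (Proposition `fixedprop1b`). -/
theorem stmt_1 {n m : ℕ}
    (X : Set (EuclideanSpace ℝ (Fin m))) (Y : Set (EuclideanSpace ℝ (Fin n)))
    (hXne : X.Nonempty) (hXcv : Convex ℝ X) (hXcp : IsCompact X)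
    (hYne : Y.Nonempty) (hYcv : Convex ℝ Y) (hYcp : IsCompact Y)
    (f : EuclideanSpace ℝ (Fin n) × EuclideanSpace ℝ (Fin m) → ℝ)
    (Gy : EuclideanSpace ℝ (Fin n) × EuclideanSpace ℝ (Fin m) → EuclideanSpace ℝ (Fin n))
    (Gx : EuclideanSpace ℝ (Fin n) × EuclideanSpace ℝ (Fin m) → EuclideanSpace ℝ (Fin m))
    (D : EuclideanSpace ℝ (Fin n) × EuclideanSpace ℝ (Fin m) →
         EuclideanSpace ℝ (Fin n) × EuclideanSpace ℝ (Fin m) →L[ℝ] ℝ)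
    (hconv : ConvexOn ℝ (Y ×ˢ X) f)
    (hdiff : ∀ p ∈ Y ×ˢ X, HasFDerivAt f (D p) p)
    (hgrad : ∀ p ∈ Y ×ˢ X, ∀ v, D p v = ⟪Gy p, v.1⟫ + ⟪Gx p, v.2⟫)
    (M₁ : ℝ) (hM₁ : 0 < M₁)
    (hLip : ∀ x ∈ X, ∀ y₁ ∈ Y, ∀ y₂ ∈ Y,
      ‖Gy (y₂, x) - Gy (y₁, x)‖ ≤ M₁ * ‖y₂ - y₁‖)
    (Q : EuclideanSpace ℝ (Fin m) → ℝ)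
    (hQ : ∀ x ∈ X, Q x = sInf ((fun y => f (y, x)) '' Y))
    (xbar : EuclideanSpace ℝ (Fin m)) (hxbar : xbar ∈ X)
    (ε : ℝ) (hε : 0 ≤ ε)
    (yhat : EuclideanSpace ℝ (Fin n)) (hyhat : yhat ∈ Y)
    (hepsopt : Q xbar ≥ f (yhat, xbar) - ε)
    (ℓ : ℝ)
    (hℓ : IsGreatest ((fun y => ⟪Gy (yhat, xbar), yhat - y⟫) '' Y) ℓ) :
    (ℓ ≤ M₁ * (Metric.diam Y) ^ 2 →
        Q xbar ≤ f (yhat, xbar) - ℓ ^ 2 / (2 * M₁ * (Metric.diam Y) ^ 2)) ∧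
    (M₁ * (Metric.diam Y) ^ 2 < ℓ →
        Q xbar ≤ f (yhat, xbar) - ℓ / 2) :=
  stmt_1_general X Y hYcv hYcp f Gy Gx D hdiff hgrad M₁ hM₁ hLip Q hQ xbar hxbar yhat hyhat ℓ hℓ
end

section
/- Let $Y \subseteq \mathbb{R}^n$ be nonempty convex compact, $f$ convex differentiable on $Y \times X$ with $\nabla_y f(\cdot, x)$ $M_1$-Lipschitz on $Y$ uniformly in $x$. Let $\hat y \in Y$ be an $\varepsilon_1$-optimal solution of $\mathcal{Q}(\bar x)=\inf_{y\in Y} f(y,\bar x)$, and let $\tilde y \in Y$ be an $\varepsilon_2$-optimal solution of $\max_{y \in Y}\langle \nabla_y f(\hat y, \bar x), \hat y - y\rangle$. Set $\hat\ell = \langle \nabla_y f(\hat y, \bar x), \hat y - \tilde y\rangle$, $\eta = \varepsilon_2 + \hat\ell$, and $\mathcal{C}(x) = f(\hat y, \bar x) - \eta + \langle \nabla_x f(\hat y, \bar x), x - \bar x\rangle$. Then $\mathcal{C} \le \mathcal{Q}$ on $X$ and $\mathcal{Q}(\bar x) - \mathcal{C}(\bar x) \le \varepsilon_0$, where $\varepsilon_0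 = \varepsilon_2 + \hat\ell$ if $\hat\ell \le 0$; $\varepsilon_0 = \varepsilon_2 + \frac{\hat\ell}{2 M_1 D^2}(2 M_1 D^2 - \hat\ell)$ if $0 < \hat\ell \le M_1 D^2$; and $\varepsilon_0 = \varepsilon_2 + \frac{\hat\ell}{2}$ otherwise, with $D = \mathrm{Diam}(Y)$. -/
/-!
The first-order inequality for the convex `f` at `(ŷ, x̄)`, combined with the `ε₂`-optimality of
`ỹ` for the linearized problem, puts `C` below every `f (y, ·)` with `y ∈ Y`, hence below `Q`.
For the gap at `x̄`, the descent lemma for the `M₁`-Lipschitz `y`-gradient along the segment from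
`ŷ` towards `ỹ` gives `Q x̄ ≤ f (ŷ, x̄) - t ℓ̂ + M₁ D² t² / 2` for every `t ∈ [0, 1]`; the choices
`t = 0`, `t = ℓ̂ / (M₁ D²)` and `t = 1` give the three cases of `ε₀`.
-/

open Set
open scoped RealInnerProductSpace

theorem ConvexOn.hasFDerivAt_apply_sub_le {E : Type*} [NormedAddCommGroup E] [NormedSpace ℝ E]
    {S : Set E} {f : E → ℝ} {f' : E →L[ℝ] ℝ} {p q : E}
    (hf : ConvexOn ℝ S f) (hp : p ∈ S) (hq : q ∈ S) (hf' : HasFDerivAt f f' p) :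
    f' (q - p) ≤ f q - f p := by
  set γ : ℝ →ᵃ[ℝ] E := AffineMap.lineMap p q
  have hγ : ConvexOn ℝ (Icc 0 1) (f ∘ γ) :=
    (hf.comp_affineMap γ).subset (fun _ ht => hf.1.lineMap_mem hp hq ht) (convex_Icc 0 1)
  have hderiv : HasDerivAt (f ∘ γ) (f' (q - p)) 0 :=
    hf'.comp_hasDerivAt_of_eq 0 AffineMap.hasDerivAt_lineMap (by simp [γ])
  simpa [slope_def_field, γ] using
    hγ.le_slope_of_hasDerivAt (by simp) (by simp) one_pos hderiv

theorem ConvexOn.sub_add_inner_le_of_hasFDerivAt {E F : Type*}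
    [NormedAddCommGroup E] [InnerProductSpace ℝ E] [NormedAddCommGroup F] [InnerProductSpace ℝ F]
    {Y : Set E} {X : Set F} {f : E × F → ℝ} {f' : E × F →L[ℝ] ℝ} {y₀ y : E} {x₀ x : F}
    {g : E} {h : F} {ℓ : ℝ} (hf : ConvexOn ℝ (Y ×ˢ X) f) (hy₀ : y₀ ∈ Y) (hx₀ : x₀ ∈ X)
    (hy : y ∈ Y) (hx : x ∈ X) (hf' : HasFDerivAt f f' (y₀, x₀))
    (hf'_eq : ∀ v, f' v = ⟪g, v.1⟫ + ⟪h, v.2⟫) (hℓ : ∀ y' ∈ Y, ⟪g, y₀ - y'⟫ ≤ ℓ) :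
    f (y₀, x₀) - ℓ + ⟪h, x - x₀⟫ ≤ f (y, x) := by
  have hfirst : ⟪g, y - y₀⟫ + ⟪h, x - x₀⟫ ≤ f (y, x) - f (y₀, x₀) := by
    have := hf.hasFDerivAt_apply_sub_le (q := (y, x)) ⟨hy₀, hx₀⟩ ⟨hy, hx⟩ hf'
    rwa [hf'_eq] at this
  have hneg : ⟪g, y - y₀⟫ = -⟪g, y₀ - y⟫ := by rw [← inner_neg_right, neg_sub]
  linarith [hℓ y hy]

theorem HasFDerivAt.comp_prodMk_left_of_inner {E F : Type*}
    [NormedAddCommGroup E] [InnerProductSpace ℝ E] [NormedAddCommGroup F] [InnerProductSpace ℝ F]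
    {f : E × F → ℝ} {f' : E × F →L[ℝ] ℝ} {y : E} {x : F} {g : E} {h : F}
    (hf : HasFDerivAt f f' (y, x)) (hf' : ∀ v, f' v = ⟪g, v.1⟫ + ⟪h, v.2⟫) :
    HasFDerivAt (fun y' => f (y', x)) (innerSL ℝ g) y := by
  refine (hf.comp y (hasFDerivAt_prodMk_left y x)).congr_fderiv ?_
  ext v
  simp [hf']

theorem apply_add_smul_sub_le_of_lipschitz_gradient {E : Type*}
    [NormedAddCommGroup E] [InnerProductSpace ℝ E]
    {S : Set E} {φ : E → ℝ} {G : E → E} {M : ℝ} (hS : Convex ℝ S)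
    (hφ : ∀ y ∈ S, HasFDerivAt φ (innerSL ℝ (G y)) y)
    (hG : ∀ y₁ ∈ S, ∀ y₂ ∈ S, ‖G y₂ - G y₁‖ ≤ M * ‖y₂ - y₁‖)
    {x y : E} (hx : x ∈ S) (hy : y ∈ S) {t : ℝ} (ht : t ∈ Icc (0 : ℝ) 1) :
    φ (x + t • (y - x)) ≤ φ x + t * ⟪G x, y - x⟫ + M * ‖y - x‖ ^ 2 / 2 * t ^ 2 := by
  set u := y - x
  set ψ : ℝ → ℝ := fun s => φ (x + s • u) - s * ⟪G x, u⟫ - M * ‖u‖ ^ 2 / 2 * s ^ 2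
  have hmem : ∀ s ∈ Icc (0 : ℝ) 1, x + s • u ∈ S := fun s hs => hS.add_smul_sub_mem hx hy hs
  have hψ : ∀ s ∈ Icc (0 : ℝ) 1, HasDerivAt ψ
      (⟪G (x + s • u), u⟫ - ⟪G x, u⟫ - M * ‖u‖ ^ 2 * s) s := by
    intro s hs
    have hline : HasDerivAt (fun s : ℝ => x + s • u) u s := by
      simpa using ((hasDerivAt_id s).smul_const u).const_add x
    refine ((((hφ _ (hmem s hs)).comp_hasDerivAt s hline).sub
      ((hasDerivAt_id s).mul_const ⟪G x, u⟫)).sub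
      ((hasDerivAt_pow 2 s).const_mul (M * ‖u‖ ^ 2 / 2))).congr_deriv ?_
    simp only [innerSL_apply_apply]
    ring
  have hψ' : ∀ s ∈ Icc (0 : ℝ) 1,
      ⟪G (x + s • u), u⟫ - ⟪G x, u⟫ - M * ‖u‖ ^ 2 * s ≤ 0 := by
    intro s hs
    have hlip := hG x hx _ (hmem s hs)
    rw [add_sub_cancel_left, norm_smul, Real.norm_of_nonneg hs.1] at hlip
    have : ⟪G (x + s • u), u⟫ - ⟪G x, u⟫ ≤ M * ‖u‖ ^ 2 * s :=
      calc ⟪G (x + s • u), u⟫ - ⟪G x, u⟫ = ⟪G (x + s • u) - G x, u⟫ := (inner_sub_left _ _ _).symm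
        _ ≤ ‖G (x + s • u) - G x‖ * ‖u‖ := real_inner_le_norm _ _
        _ ≤ M * (s * ‖u‖) * ‖u‖ := by gcongr
        _ = M * ‖u‖ ^ 2 * s := by ring
    linarith
  have hanti : AntitoneOn ψ (Icc 0 1) := by
    refine antitoneOn_of_hasDerivWithinAt_nonpos (convex_Icc 0 1)
      (fun s hs => (hψ s hs).continuousAt.continuousWithinAt) (fun s hs => ?_)
      (fun s hs => hψ' s (interior_subset hs))
    exact (hψ s (interior_subset hs)).hasDerivWithinAt
  have hψ0 : ψ 0 = φ x := by simp [ψ]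
  have := hanti (left_mem_Icc.2 zero_le_one) ht ht.1
  rw [hψ0] at this
  dsimp only [ψ] at this
  linarith

theorem apply_add_smul_sub_le_of_lipschitz_gradient_of_diam {E : Type*}
    [NormedAddCommGroup E] [InnerProductSpace ℝ E]
    {S : Set E} {φ : E → ℝ} {G : E → E} {M : ℝ} (hS : Convex ℝ S) (hSb : Bornology.IsBounded S)
    (hφ : ∀ y ∈ S, HasFDerivAt φ (innerSL ℝ (G y)) y)
    (hG : ∀ y₁ ∈ S, ∀ y₂ ∈ S, ‖G y₂ - G y₁‖ ≤ M * ‖y₂ - y₁‖) (hM : 0 ≤ M)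
    {x y : E} (hx : x ∈ S) (hy : y ∈ S) {t : ℝ} (ht : t ∈ Icc (0 : ℝ) 1) :
    φ (x + t • (y - x)) ≤ φ x - t * ⟪G x, x - y⟫ + M * Metric.diam S ^ 2 / 2 * t ^ 2 := by
  have hdist : ‖y - x‖ ≤ Metric.diam S := by
    rw [← dist_eq_norm]
    exact Metric.dist_le_diam_of_mem hSb hy hx
  calc φ (x + t • (y - x)) ≤ φ x + t * ⟪G x, y - x⟫ + M * ‖y - x‖ ^ 2 / 2 * t ^ 2 :=
        apply_add_smul_sub_le_of_lipschitz_gradient hS hφ hG hx hy ht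
    _ ≤ _ := by
      have hneg : ⟪G x, y - x⟫ = -⟪G x, x - y⟫ := by rw [← inner_neg_right, neg_sub]
      rw [hneg, mul_neg, ← sub_eq_add_neg]
      gcongr

theorem sub_add_le_of_forall_le_sub_mul_add_sq {q p ℓ M d : ℝ}
    (h : ∀ t ∈ Icc (0 : ℝ) 1, q ≤ p - t * ℓ + M * d ^ 2 / 2 * t ^ 2) :
    q - p + ℓ ≤ if ℓ ≤ 0 then ℓ
      else if ℓ ≤ M * d ^ 2 then ℓ / (2 * M * d ^ 2) * (2 * M * d ^ 2 - ℓ)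
      else ℓ / 2 := by
  split_ifs with hℓ hℓc
  · linarith [h 0 (left_mem_Icc.2 zero_le_one)]
  · rw [mul_assoc 2 M]
    generalize M * d ^ 2 = c at *
    have hc : 0 < c := (not_le.1 hℓ).trans_le hℓc
    have := h (ℓ / c) ⟨(div_pos (not_le.1 hℓ) hc).le, (div_le_one hc).2 hℓc⟩
    have key : ℓ / c * ℓ - c / 2 * (ℓ / c) ^ 2 = ℓ - ℓ / (2 * c) * (2 * c - ℓ) := by
      field_simp
      ring
    linarith
  · linarith [h 1 (right_mem_Icc.2 zero_le_one)]

theorem stmt_2_general {n m : ℕ}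
    (X : Set (EuclideanSpace ℝ (Fin m))) (Y : Set (EuclideanSpace ℝ (Fin n)))
    (hYcv : Convex ℝ Y) (hYcp : IsCompact Y)
    (f : EuclideanSpace ℝ (Fin n) × EuclideanSpace ℝ (Fin m) → ℝ)
    (Gy : EuclideanSpace ℝ (Fin n) × EuclideanSpace ℝ (Fin m) → EuclideanSpace ℝ (Fin n))
    (Gx : EuclideanSpace ℝ (Fin n) × EuclideanSpace ℝ (Fin m) → EuclideanSpace ℝ (Fin m))
    (D : EuclideanSpace ℝ (Fin n) × EuclideanSpace ℝ (Fin m) →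
         EuclideanSpace ℝ (Fin n) × EuclideanSpace ℝ (Fin m) →L[ℝ] ℝ)
    (hconv : ConvexOn ℝ (Y ×ˢ X) f)
    (hdiff : ∀ p ∈ Y ×ˢ X, HasFDerivAt f (D p) p)
    (hgrad : ∀ p ∈ Y ×ˢ X, ∀ v, D p v = ⟪Gy p, v.1⟫ + ⟪Gx p, v.2⟫)
    (M₁ : ℝ) (hM₁ : 0 < M₁)
    (hLip : ∀ x ∈ X, ∀ y₁ ∈ Y, ∀ y₂ ∈ Y,
      ‖Gy (y₂, x) - Gy (y₁, x)‖ ≤ M₁ * ‖y₂ - y₁‖)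
    (Q : EuclideanSpace ℝ (Fin m) → ℝ)
    (hQ : ∀ x ∈ X, Q x = sInf ((fun y => f (y, x)) '' Y))
    (xbar : EuclideanSpace ℝ (Fin m)) (hxbar : xbar ∈ X)
    (ε₂ : ℝ)
    (yhat : EuclideanSpace ℝ (Fin n)) (hyhat : yhat ∈ Y)
    -- the exact optimal value `ℓ₁` of the linearized problem and an `ε₂`-optimal solution
    (ℓ₁ : ℝ)
    (hℓ₁ : IsGreatest ((fun y => ⟪Gy (yhat, xbar), yhat - y⟫) '' Y) ℓ₁)
    (ytil : EuclideanSpace ℝ (Fin n)) (hytil : ytil ∈ Y)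
    (hytilopt : ℓ₁ - ε₂ ≤ ⟪Gy (yhat, xbar), yhat - ytil⟫)
    (ℓhat η ε₀ : ℝ)
    (hℓhat : ℓhat = ⟪Gy (yhat, xbar), yhat - ytil⟫)
    (hη : η = ε₂ + ℓhat)
    (hε₀ : ε₀ = if ℓhat ≤ 0 then ε₂ + ℓhat
      else if ℓhat ≤ M₁ * (Metric.diam Y) ^ 2 then
        ε₂ + ℓhat / (2 * M₁ * (Metric.diam Y) ^ 2) * (2 * M₁ * (Metric.diam Y) ^ 2 - ℓhat)
      else ε₂ + ℓhat / 2)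
    (C : EuclideanSpace ℝ (Fin m) → ℝ)
    (hC : ∀ x, C x = f (yhat, xbar) - η + ⟪Gx (yhat, xbar), x - xbar⟫) :
    (∀ x ∈ X, C x ≤ Q x) ∧ Q xbar - C xbar ≤ ε₀ := by
  have hcut : ∀ x ∈ X, ∀ y ∈ Y, C x ≤ f (y, x) := fun x hx y hy => by
    have := hconv.sub_add_inner_le_of_hasFDerivAt (ℓ := η) hyhat hxbar hy hx
      (hdiff _ ⟨hyhat, hxbar⟩) (hgrad _ ⟨hyhat, hxbar⟩) (fun y hy => (hℓ₁.2 ⟨y, hy, rfl⟩).trans (by linarith))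
    rwa [hC]
  have hQle : ∀ y ∈ Y, Q xbar ≤ f (y, xbar) := fun y hy => by
    rw [hQ xbar hxbar]
    exact csInf_le ⟨C xbar, forall_mem_image.2 (hcut xbar hxbar)⟩ (mem_image_of_mem _ hy)
  refine ⟨fun x hx => ?_, ?_⟩
  · rw [hQ x hx]
    exact le_csInf ⟨_, mem_image_of_mem _ hyhat⟩ (forall_mem_image.2 (hcut x hx))
  have hdesc : ∀ t ∈ Icc (0 : ℝ) 1,
      Q xbar ≤ f (yhat, xbar) - t * ℓhat + M₁ * Metric.diam Y ^ 2 / 2 * t ^ 2 := fun t ht =>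
    hℓhat ▸ (hQle _ (hYcv.add_smul_sub_mem hyhat hytil ht)).trans
      (apply_add_smul_sub_le_of_lipschitz_gradient_of_diam (φ := fun y => f (y, xbar)) hYcv
        hYcp.isBounded
        (fun y hy => (hdiff _ ⟨hy, hxbar⟩).comp_prodMk_left_of_inner (hgrad _ ⟨hy, hxbar⟩))
        (hLip xbar hxbar) hM₁.le hyhat hytil ht)
  have hgap := sub_add_le_of_forall_le_sub_mul_add_sq hdesc
  simp only [← add_ite] at hε₀
  rw [hC, hη, sub_self, inner_zero_right, add_zero, hε₀]
  linarith

/-- Inexact cut with approximate solution of the auxiliary linearized problem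
(Proposition `fixedprop2`). -/
theorem stmt_2 {n m : ℕ}
    (X : Set (EuclideanSpace ℝ (Fin m))) (Y : Set (EuclideanSpace ℝ (Fin n)))
    (hXne : X.Nonempty) (hXcv : Convex ℝ X) (hXcp : IsCompact X)
    (hYne : Y.Nonempty) (hYcv : Convex ℝ Y) (hYcp : IsCompact Y)
    (f : EuclideanSpace ℝ (Fin n) × EuclideanSpace ℝ (Fin m) → ℝ)
    (Gy : EuclideanSpace ℝ (Fin n) × EuclideanSpace ℝ (Fin m) → EuclideanSpace ℝ (Fin n))
    (Gx : EuclideanSpace ℝ (Fin n) × EuclideanSpace ℝ (Fin m) → EuclideanSpace ℝ (Fin m))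
    (D : EuclideanSpace ℝ (Fin n) × EuclideanSpace ℝ (Fin m) →
         EuclideanSpace ℝ (Fin n) × EuclideanSpace ℝ (Fin m) →L[ℝ] ℝ)
    (hconv : ConvexOn ℝ (Y ×ˢ X) f)
    (hdiff : ∀ p ∈ Y ×ˢ X, HasFDerivAt f (D p) p)
    (hgrad : ∀ p ∈ Y ×ˢ X, ∀ v, D p v = ⟪Gy p, v.1⟫ + ⟪Gx p, v.2⟫)
    (M₁ : ℝ) (hM₁ : 0 < M₁)
    (hLip : ∀ x ∈ X, ∀ y₁ ∈ Y, ∀ y₂ ∈ Y,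
      ‖Gy (y₂, x) - Gy (y₁, x)‖ ≤ M₁ * ‖y₂ - y₁‖)
    (Q : EuclideanSpace ℝ (Fin m) → ℝ)
    (hQ : ∀ x ∈ X, Q x = sInf ((fun y => f (y, x)) '' Y))
    (xbar : EuclideanSpace ℝ (Fin m)) (hxbar : xbar ∈ X)
    (ε₁ ε₂ : ℝ) (hε₁ : 0 ≤ ε₁) (hε₂ : 0 ≤ ε₂)
    (yhat : EuclideanSpace ℝ (Fin n)) (hyhat : yhat ∈ Y)
    (hepsopt : Q xbar ≥ f (yhat, xbar) - ε₁)
    -- the exact optimal value `ℓ₁` of the linearized problem and an `ε₂`-optimal solution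
    (ℓ₁ : ℝ)
    (hℓ₁ : IsGreatest ((fun y => ⟪Gy (yhat, xbar), yhat - y⟫) '' Y) ℓ₁)
    (ytil : EuclideanSpace ℝ (Fin n)) (hytil : ytil ∈ Y)
    (hytilopt : ℓ₁ - ε₂ ≤ ⟪Gy (yhat, xbar), yhat - ytil⟫)
    (ℓhat η ε₀ : ℝ)
    (hℓhat : ℓhat = ⟪Gy (yhat, xbar), yhat - ytil⟫)
    (hη : η = ε₂ + ℓhat)
    (hε₀ : ε₀ = if ℓhat ≤ 0 then ε₂ + ℓhat
      else if ℓhat ≤ M₁ * (Metric.diam Y) ^ 2 then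
        ε₂ + ℓhat / (2 * M₁ * (Metric.diam Y) ^ 2) * (2 * M₁ * (Metric.diam Y) ^ 2 - ℓhat)
      else ε₂ + ℓhat / 2)
    (C : EuclideanSpace ℝ (Fin m) → ℝ)
    (hC : ∀ x, C x = f (yhat, xbar) - η + ⟪Gx (yhat, xbar), x - xbar⟫) :
    (∀ x ∈ X, C x ≤ Q x) ∧ Q xbar - C xbar ≤ ε₀ :=
  stmt_2_general X Y hYcv hYcp f Gy Gx D hconv hdiff hgrad M₁ hM₁ hLip Q hQ xbar hxbar ε₂ yhat hyhat
    ℓ₁ hℓ₁ ytil hytil hytilopt ℓhat η ε₀ hℓhat hη hε₀ C hC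
end

section
/- Let $\mathcal{Q}(x) = \inf\{f(y,x) : y \in Y,\ Ay + Bx = b,\ g(y,x) \le 0\}$ with $Y$ convex compact, $f$ and each component of $g$ convex and differentiable on $Y \times X$, and assume strong duality holds at every $x \in X$ (e.g., via a Slater condition). Fix $\bar x \in X$, let $\hat y$ be an $\varepsilon$-optimal feasible primal solution at $\bar x$, and let $(\hat\lambda, \hat\mu)$ with $\hat\mu \ge 0$ be an $\varepsilon$-optimal feasible dual solution. Define the Lagrangian $L_{\bar x}(y, \lambda, \mu) = f(y, \bar x) + \lambda^T(Bx + Ay - b) + \mu^T g(y, \bar x)$ evaluated at $x = \bar x$, and $\eta = \max_{y \in Y} \langle \nabla_y L_{\bar x}(\hat y, \hat\lambda, \hat\mu), \hat y - y \rangle$. Then the affine function $\mathcal{C}(x) = L_{\bar x}(\hat y, \hat\lambda, \hat\mu) - \eta + \langle \nabla_x L_{\bar x}(\hat y, \hat\lambda, \hat\mu), x - \bar x\rangle$ satisfies $\mathcal{C}(x) \le \mathcal{Q}(x)$ for all $x \in X$, and $\mathcal{Q}(\bar x) - \mathcal{C}(\bar x) \le \varepsilon + \eta$. -/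
/-!
For `μ̂ ≥ 0` the Lagrangian `(y, x) ↦ L(y, x)` is jointly convex on `Y × X`, hence lies above its
linearization at `(ŷ, x̄)`. Over `y ∈ Y` the `y`-part of that linearization is at least `-η`, so
`C(x) ≤ θ_x(λ̂, μ̂) ≤ Q(x)` by weak duality. At `x̄`, `C(x̄) = L(ŷ, x̄) - η ≥ θ_x̄(λ̂, μ̂) - η`, and
`ε`-optimality of the dual pair gives `Q(x̄) - C(x̄) ≤ ε + η`.
-/

open Set
open scoped RealInnerProductSpace

theorem ConvexOn.add_fderiv_sub_le_s3 {E : Type*} [NormedAddCommGroup E] [NormedSpace ℝ E]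
    {s : Set E} {h : E → ℝ} {D : E →L[ℝ] ℝ} {z₀ z : E} (hh : ConvexOn ℝ s h)
    (hz₀ : z₀ ∈ s) (hz : z ∈ s) (hD : HasFDerivAt h D z₀) :
    h z₀ + D (z - z₀) ≤ h z := by
  set ℓ : ℝ →ᵃ[ℝ] E := AffineMap.lineMap z₀ z
  have hderiv : HasDerivAt (h ∘ ℓ) (D (z - z₀)) 0 :=
    HasFDerivAt.comp_hasDerivAt (0 : ℝ) (by simpa [ℓ] using hD) AffineMap.hasDerivAt_lineMap
  have := (hh.comp_affineMap ℓ).le_slope_of_hasDerivAt (by simpa [ℓ] using hz₀)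
    (by simpa [ℓ] using hz) zero_lt_one hderiv
  simpa [ℓ, slope_def_field, le_sub_iff_add_le'] using this

section Lagrangian

variable {E F G ι : Type*} [NormedAddCommGroup E] [InnerProductSpace ℝ E]
  [NormedAddCommGroup F] [InnerProductSpace ℝ F] [NormedAddCommGroup G] [InnerProductSpace ℝ G]
  [Fintype ι] (f : E × F → ℝ) (g : ι → E × F → ℝ) (A : E →L[ℝ] G) (B : F →L[ℝ] G) (b : G)
  (lam : G) (mu : ι → ℝ)

def lagrangian (z : E × F) : ℝ :=
  f z + ⟪lam, A z.1 + B z.2 - b⟫ + ∑ i, mu i * g i z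

variable {f g}

theorem convexOn_lagrangian {s : Set (E × F)} (hf : ConvexOn ℝ s f)
    (hg : ∀ i, ConvexOn ℝ s (g i)) (hmu : ∀ i, 0 ≤ mu i) :
    ConvexOn ℝ s (lagrangian f g A B b lam mu) := by
  have haff : ConvexOn ℝ s fun z : E × F => ⟪lam, A z.1 + B z.2 - b⟫ := by
    refine ((((innerSL ℝ lam).comp (A.coprod B) : E × F →L[ℝ] ℝ) : E × F →ₗ[ℝ] ℝ).convexOn
      hf.1 |>.add_const (-⟪lam, b⟫)).congr fun z _ => ?_
    simp [inner_sub_right, ← sub_eq_add_neg]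
  have hsum : ConvexOn ℝ s fun z => ∑ i, mu i * g i z := by
    have := Finset.sum_induction (s := Finset.univ) (fun i => mu i • g i) (ConvexOn ℝ s)
      (fun _ _ => ConvexOn.add) (convexOn_const 0 hf.1) fun i _ => (hg i).smul (hmu i)
    simpa [Finset.sum_fn] using this
  exact (hf.add haff).add hsum

theorem hasFDerivAt_lagrangian {z : E × F} {Df : E × F →L[ℝ] ℝ} {Dg : ι → E × F →L[ℝ] ℝ}
    (hf : HasFDerivAt f Df z) (hg : ∀ i, HasFDerivAt (g i) (Dg i) z) :
    HasFDerivAt (lagrangian f g A B b lam mu)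
      (Df + (innerSL ℝ lam).comp (A.coprod B) + ∑ i, mu i • Dg i) z := by
  have haff : HasFDerivAt (fun z : E × F => ⟪lam, A z.1 + B z.2 - b⟫)
      ((innerSL ℝ lam).comp (A.coprod B)) z :=
    (innerSL ℝ lam).hasFDerivAt.comp z ((A.coprod B).hasFDerivAt.sub_const b)
  exact (hf.add haff).add (HasFDerivAt.fun_sum fun i _ => (hg i).const_mul (mu i))

variable [CompleteSpace E] [CompleteSpace F] [CompleteSpace G]

theorem lagrangian_add_inner_le {s : Set (E × F)} {z₀ z : E × F} (hf : ConvexOn ℝ s f)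
    (hg : ∀ i, ConvexOn ℝ s (g i)) (hmu : ∀ i, 0 ≤ mu i) (hz₀ : z₀ ∈ s) (hz : z ∈ s)
    {Df : E × F →L[ℝ] ℝ} {Dg : ι → E × F →L[ℝ] ℝ} {Gfy : E} {Gfx : F} {Ggy : ι → E}
    {Ggx : ι → F} (hfD : HasFDerivAt f Df z₀) (hfgrad : ∀ v, Df v = ⟪Gfy, v.1⟫ + ⟪Gfx, v.2⟫)
    (hgD : ∀ i, HasFDerivAt (g i) (Dg i) z₀)
    (hggrad : ∀ i v, Dg i v = ⟪Ggy i, v.1⟫ + ⟪Ggx i, v.2⟫) :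
    lagrangian f g A B b lam mu z₀
      + ⟪Gfy + ContinuousLinearMap.adjoint A lam + ∑ i, mu i • Ggy i, z.1 - z₀.1⟫
      + ⟪Gfx + ContinuousLinearMap.adjoint B lam + ∑ i, mu i • Ggx i, z.2 - z₀.2⟫
      ≤ lagrangian f g A B b lam mu z := by
  refine le_of_eq_of_le ?_ <| (convexOn_lagrangian A B b lam mu hf hg hmu).add_fderiv_sub_le_s3
    hz₀ hz (hasFDerivAt_lagrangian A B b lam mu hfD hgD)
  rw [add_assoc]
  congr 1
  simp only [inner_add_left, inner_add_right, inner_sub_right, sum_inner, real_inner_smul_left,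
    ContinuousLinearMap.adjoint_inner_left, map_sub, add_apply, sum_apply, smul_apply, hfgrad,
    hggrad, ContinuousLinearMap.comp_apply, ContinuousLinearMap.coprod_apply, coe_innerSL_apply,
    smul_eq_mul, mul_add, Finset.sum_add_distrib]
  ring

end Lagrangian

theorem stmt_3_general {n m q p : ℕ}
    (X : Set (EuclideanSpace ℝ (Fin m))) (Y : Set (EuclideanSpace ℝ (Fin n)))
    (hYne : Y.Nonempty)
    (A : EuclideanSpace ℝ (Fin n) →L[ℝ] EuclideanSpace ℝ (Fin q))
    (B : EuclideanSpace ℝ (Fin m) →L[ℝ] EuclideanSpace ℝ (Fin q))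
    (b : EuclideanSpace ℝ (Fin q))
    (f : EuclideanSpace ℝ (Fin n) × EuclideanSpace ℝ (Fin m) → ℝ)
    (g : Fin p → EuclideanSpace ℝ (Fin n) × EuclideanSpace ℝ (Fin m) → ℝ)
    -- partial gradients and joint differentiability of `f` and of each `g i` on `Y ×ˢ X`
    (Gfy : EuclideanSpace ℝ (Fin n) × EuclideanSpace ℝ (Fin m) → EuclideanSpace ℝ (Fin n))
    (Gfx : EuclideanSpace ℝ (Fin n) × EuclideanSpace ℝ (Fin m) → EuclideanSpace ℝ (Fin m))
    (Ggy : Fin p → EuclideanSpace ℝ (Fin n) × EuclideanSpace ℝ (Fin m) → EuclideanSpace ℝ (Fin n))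
    (Ggx : Fin p → EuclideanSpace ℝ (Fin n) × EuclideanSpace ℝ (Fin m) → EuclideanSpace ℝ (Fin m))
    (Df : EuclideanSpace ℝ (Fin n) × EuclideanSpace ℝ (Fin m) →
          EuclideanSpace ℝ (Fin n) × EuclideanSpace ℝ (Fin m) →L[ℝ] ℝ)
    (Dg : Fin p → EuclideanSpace ℝ (Fin n) × EuclideanSpace ℝ (Fin m) →
          EuclideanSpace ℝ (Fin n) × EuclideanSpace ℝ (Fin m) →L[ℝ] ℝ)
    (hfconv : ConvexOn ℝ (Y ×ˢ X) f)
    (hgconv : ∀ i, ConvexOn ℝ (Y ×ˢ X) (g i))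
    (hfdiff : ∀ z ∈ Y ×ˢ X, HasFDerivAt f (Df z) z)
    (hfgrad : ∀ z ∈ Y ×ˢ X, ∀ v, Df z v = ⟪Gfy z, v.1⟫ + ⟪Gfx z, v.2⟫)
    (hgdiff : ∀ i, ∀ z ∈ Y ×ˢ X, HasFDerivAt (g i) (Dg i z) z)
    (hggrad : ∀ i, ∀ z ∈ Y ×ˢ X, ∀ v, Dg i z v = ⟪Ggy i z, v.1⟫ + ⟪Ggx i z, v.2⟫)
    -- value function, feasible set, dual function
    (S : EuclideanSpace ℝ (Fin m) → Set (EuclideanSpace ℝ (Fin n)))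
    (hS : ∀ x, S x = {y ∈ Y | A y + B x = b ∧ ∀ i, g (i) (y, x) ≤ 0})
    (Q : EuclideanSpace ℝ (Fin m) → ℝ)
    (θ : EuclideanSpace ℝ (Fin m) → EuclideanSpace ℝ (Fin q) → (Fin p → ℝ) → ℝ)
    (hθ : ∀ x lam mu, θ x lam mu =
      sInf ((fun y => f (y, x) + ⟪lam, A y + B x - b⟫ + ∑ i, mu i * g i (y, x)) '' Y))
    -- strong duality at every `x ∈ X`
    (hstrong : ∀ x ∈ X,
      IsLUB {v : ℝ | ∃ lam mu, (∀ i, 0 ≤ mu i) ∧ v = θ x lam mu} (Q x))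
    (xbar : EuclideanSpace ℝ (Fin m)) (hxbar : xbar ∈ X)
    (ε : ℝ)
    -- `ε`-optimal feasible primal solution
    (yhat : EuclideanSpace ℝ (Fin n)) (hyhatfeas : yhat ∈ S xbar)
    -- `ε`-optimal feasible dual solution
    (lamhat : EuclideanSpace ℝ (Fin q)) (muhat : Fin p → ℝ)
    (hmuhat : ∀ i, 0 ≤ muhat i)
    (hdualopt : θ xbar lamhat muhat ≥ Q xbar - ε)
    -- Lagrangian at `x̄`, its value and gradient at `ŷ`
    (L : EuclideanSpace ℝ (Fin n) → EuclideanSpace ℝ (Fin m) → ℝ)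
    (hL : ∀ y x, L y x = f (y, x) + ⟪lamhat, A y + B x - b⟫ + ∑ i, muhat i * g i (y, x))
    (GLy : EuclideanSpace ℝ (Fin n)) (GLx : EuclideanSpace ℝ (Fin m))
    (hGLy : GLy = Gfy (yhat, xbar) + (ContinuousLinearMap.adjoint A) lamhat
      + ∑ i, muhat i • Ggy i (yhat, xbar))
    (hGLx : GLx = Gfx (yhat, xbar) + (ContinuousLinearMap.adjoint B) lamhat
      + ∑ i, muhat i • Ggx i (yhat, xbar))
    (η : ℝ)
    (hη : IsGreatest ((fun y => ⟪GLy, yhat - y⟫) '' Y) η)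
    (C : EuclideanSpace ℝ (Fin m) → ℝ)
    (hC : ∀ x, C x = L yhat xbar - η + ⟪GLx, x - xbar⟫) :
    (∀ x ∈ X, C x ≤ Q x) ∧ Q xbar - C xbar ≤ ε + η := by
  have hyhatY : yhat ∈ Y := by rw [hS] at hyhatfeas; exact hyhatfeas.1
  have hz₀ : (yhat, xbar) ∈ Y ×ˢ X := ⟨hyhatY, hxbar⟩
  have hLlag : ∀ y x, L y x = lagrangian f g A B b lamhat muhat (y, x) := hL
  have hCL : ∀ x ∈ X, ∀ y ∈ Y, C x ≤ L y x := by
    intro x hx y hy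
    have hcut := lagrangian_add_inner_le A B b lamhat muhat hfconv hgconv hmuhat hz₀
      (show (y, x) ∈ Y ×ˢ X from ⟨hy, hx⟩) (hfdiff _ hz₀) (hfgrad _ hz₀) (hgdiff · _ hz₀)
      (hggrad · _ hz₀)
    have hηy : ⟪GLy, yhat - y⟫ ≤ η := hη.2 (mem_image_of_mem _ hy)
    rw [← hGLy, ← hGLx, inner_sub_right] at hcut
    rw [inner_sub_right] at hηy
    rw [hC, hLlag, hLlag]
    linarith
  have hθL : ∀ x, θ x lamhat muhat = sInf ((L · x) '' Y) := by simp [hθ, hL]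
  have hlb : ∀ x ∈ X, C x ∈ lowerBounds ((L · x) '' Y) := fun x hx =>
    forall_mem_image.2 (hCL x hx)
  have hweak : ∀ x ∈ X, θ x lamhat muhat ≤ Q x := fun x hx =>
    (hstrong x hx).1 ⟨lamhat, muhat, hmuhat, rfl⟩
  refine ⟨fun x hx => (hθL x ▸ le_csInf (hYne.image _) (hlb x hx)).trans (hweak x hx), ?_⟩
  have hθ_le_L : θ xbar lamhat muhat ≤ L yhat xbar :=
    hθL xbar ▸ csInf_le ⟨C xbar, hlb xbar hxbar⟩ (mem_image_of_mem _ hyhatY)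
  rw [hC, sub_self, inner_zero_right]
  linarith

/-- Inexact cut for the value function of a parametric convex program with
variable feasible set (Proposition `varprop1`). -/
theorem stmt_3 {n m q p : ℕ}
    (X : Set (EuclideanSpace ℝ (Fin m))) (Y : Set (EuclideanSpace ℝ (Fin n)))
    (hXne : X.Nonempty) (hXcv : Convex ℝ X) (hXcp : IsCompact X)
    (hYne : Y.Nonempty) (hYcv : Convex ℝ Y) (hYcp : IsCompact Y)
    (A : EuclideanSpace ℝ (Fin n) →L[ℝ] EuclideanSpace ℝ (Fin q))
    (B : EuclideanSpace ℝ (Fin m) →L[ℝ] EuclideanSpace ℝ (Fin q))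
    (b : EuclideanSpace ℝ (Fin q))
    (f : EuclideanSpace ℝ (Fin n) × EuclideanSpace ℝ (Fin m) → ℝ)
    (g : Fin p → EuclideanSpace ℝ (Fin n) × EuclideanSpace ℝ (Fin m) → ℝ)
    -- partial gradients and joint differentiability of `f` and of each `g i` on `Y ×ˢ X`
    (Gfy : EuclideanSpace ℝ (Fin n) × EuclideanSpace ℝ (Fin m) → EuclideanSpace ℝ (Fin n))
    (Gfx : EuclideanSpace ℝ (Fin n) × EuclideanSpace ℝ (Fin m) → EuclideanSpace ℝ (Fin m))
    (Ggy : Fin p → EuclideanSpace ℝ (Fin n) × EuclideanSpace ℝ (Fin m) → EuclideanSpace ℝ (Fin n))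
    (Ggx : Fin p → EuclideanSpace ℝ (Fin n) × EuclideanSpace ℝ (Fin m) → EuclideanSpace ℝ (Fin m))
    (Df : EuclideanSpace ℝ (Fin n) × EuclideanSpace ℝ (Fin m) →
          EuclideanSpace ℝ (Fin n) × EuclideanSpace ℝ (Fin m) →L[ℝ] ℝ)
    (Dg : Fin p → EuclideanSpace ℝ (Fin n) × EuclideanSpace ℝ (Fin m) →
          EuclideanSpace ℝ (Fin n) × EuclideanSpace ℝ (Fin m) →L[ℝ] ℝ)
    (hfconv : ConvexOn ℝ (Y ×ˢ X) f)
    (hgconv : ∀ i, ConvexOn ℝ (Y ×ˢ X) (g i))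
    (hfdiff : ∀ z ∈ Y ×ˢ X, HasFDerivAt f (Df z) z)
    (hfgrad : ∀ z ∈ Y ×ˢ X, ∀ v, Df z v = ⟪Gfy z, v.1⟫ + ⟪Gfx z, v.2⟫)
    (hgdiff : ∀ i, ∀ z ∈ Y ×ˢ X, HasFDerivAt (g i) (Dg i z) z)
    (hggrad : ∀ i, ∀ z ∈ Y ×ˢ X, ∀ v, Dg i z v = ⟪Ggy i z, v.1⟫ + ⟪Ggx i z, v.2⟫)
    -- value function, feasible set, dual function
    (S : EuclideanSpace ℝ (Fin m) → Set (EuclideanSpace ℝ (Fin n)))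
    (hS : ∀ x, S x = {y ∈ Y | A y + B x = b ∧ ∀ i, g (i) (y, x) ≤ 0})
    (Q : EuclideanSpace ℝ (Fin m) → ℝ)
    (hQ : ∀ x ∈ X, Q x = sInf ((fun y => f (y, x)) '' S x))
    (θ : EuclideanSpace ℝ (Fin m) → EuclideanSpace ℝ (Fin q) → (Fin p → ℝ) → ℝ)
    (hθ : ∀ x lam mu, θ x lam mu =
      sInf ((fun y => f (y, x) + ⟪lam, A y + B x - b⟫ + ∑ i, mu i * g i (y, x)) '' Y))
    -- strong duality at every `x ∈ X`
    (hstrong : ∀ x ∈ X,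
      IsLUB {v : ℝ | ∃ lam mu, (∀ i, 0 ≤ mu i) ∧ v = θ x lam mu} (Q x))
    (xbar : EuclideanSpace ℝ (Fin m)) (hxbar : xbar ∈ X)
    (ε : ℝ) (hε : 0 ≤ ε)
    -- `ε`-optimal feasible primal solution
    (yhat : EuclideanSpace ℝ (Fin n)) (hyhatfeas : yhat ∈ S xbar)
    (hyhatopt : f (yhat, xbar) ≤ Q xbar + ε)
    -- `ε`-optimal feasible dual solution
    (lamhat : EuclideanSpace ℝ (Fin q)) (muhat : Fin p → ℝ)
    (hmuhat : ∀ i, 0 ≤ muhat i)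
    (hdualopt : θ xbar lamhat muhat ≥ Q xbar - ε)
    -- Lagrangian at `x̄`, its value and gradient at `ŷ`
    (L : EuclideanSpace ℝ (Fin n) → EuclideanSpace ℝ (Fin m) → ℝ)
    (hL : ∀ y x, L y x = f (y, x) + ⟪lamhat, A y + B x - b⟫ + ∑ i, muhat i * g i (y, x))
    (GLy : EuclideanSpace ℝ (Fin n)) (GLx : EuclideanSpace ℝ (Fin m))
    (hGLy : GLy = Gfy (yhat, xbar) + (ContinuousLinearMap.adjoint A) lamhat
      + ∑ i, muhat i • Ggy i (yhat, xbar))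
    (hGLx : GLx = Gfx (yhat, xbar) + (ContinuousLinearMap.adjoint B) lamhat
      + ∑ i, muhat i • Ggx i (yhat, xbar))
    (η : ℝ)
    (hη : IsGreatest ((fun y => ⟪GLy, yhat - y⟫) '' Y) η)
    (C : EuclideanSpace ℝ (Fin m) → ℝ)
    (hC : ∀ x, C x = L yhat xbar - η + ⟪GLx, x - xbar⟫) :
    (∀ x ∈ X, C x ≤ Q x) ∧ Q xbar - C xbar ≤ ε + η :=
  stmt_3_general X Y hYne A B b f g Gfy Gfx Ggy Ggx Df Dg hfconv hgconv hfdiff hfgrad hgdiff hggrad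
    S hS Q θ hθ hstrong xbar hxbar ε yhat hyhatfeas lamhat muhat hmuhat hdualopt L hL GLy GLx hGLy
    hGLx η hη C hC
end

section
/- In the setting of the inexact cut for a parametric convex program with variable feasible set, assume additionally that $\nabla_y f(\cdot, x)$ is $M_1$-Lipschitz and each $\nabla_y g_i(\cdot, x)$ is $M_2$-Lipschitz on $Y$ uniformly in $x \in X$, and that the $\ell_1$-norm of the approximate dual multiplier satisfies $\|\hat\mu\|_1 \le \mathcal{U}$. Set $M_3 = M_1 + \mathcal{U} M_2$, $D = \mathrm{Diam}(Y)$, and $\ell = \max_{y \in Y}\langle \nabla_y L_{\bar x}(\hat y, \hat\lambda, \hat\mu), \hat y - y\rangle$. Then $\mathcal{Q}(\bar x) - \mathcal{C}(\bar x) \le \varepsilon + \ell - \frac{\ell^2}{2 M_3 D^2}$ if $\ell \le M_3 D^2$, and $\mathcal{Q}(\bar x) - \mathcal{C}(\bar x) \le \varepsilon + \frac{\ell}{2}$ otherwise. -/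
open Set
open scoped RealInnerProductSpace

/-!
The gap `𝒬(x̄) - 𝒞(x̄)` is at most `ε + ℓ + L(y) - L(ŷ)` for every `y ∈ Y`, because the dual
function `θ(λ̂, μ̂) = inf_Y L` is `ε`-close to `𝒬(x̄)` and `𝒞(x̄) = L(ŷ) - ℓ`. Moving from `ŷ`
towards the maximiser `y*` defining `ℓ`, the directional derivative of `L` at `ŷ` is `-ℓ`, and the
`M₃`-Lipschitz gradient gives the descent lemma
`L(ŷ + t(y* - ŷ)) ≤ L(ŷ) - tℓ + M₃ D² t² / 2` for `t ∈ [0, 1]`. Minimising the right-hand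
side over `t` (at `t = ℓ / (M₃ D²)`, or at `t = 1` when this exceeds `1`) gives both bounds.
-/

theorem le_add_mul_add_sq_of_hasDerivAt_le {φ φ' : ℝ → ℝ} {K t : ℝ} (ht : 0 ≤ t)
    (hφ : ∀ s ∈ Icc 0 t, HasDerivAt φ (φ' s) s)
    (hφ' : ∀ s ∈ Icc 0 t, φ' s ≤ φ' 0 + K * s) :
    φ t ≤ φ 0 + t * φ' 0 + K / 2 * t ^ 2 := by
  have hB : ∀ s, HasDerivAt (fun s => φ 0 + s * φ' 0 + K / 2 * s ^ 2) (φ' 0 + K * s) s := by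
    intro s
    have := (((hasDerivAt_id' s).mul_const (φ' 0)).const_add (φ 0)).fun_add
      ((hasDerivAt_pow 2 s).const_mul (K / 2))
    exact this.congr_deriv (by ring)
  refine image_le_of_deriv_right_le_deriv_boundary (f' := φ') (B' := fun s => φ' 0 + K * s)
    (fun s hs => (hφ s hs).continuousAt.continuousWithinAt)
    (fun s hs => (hφ s (Ico_subset_Icc_self hs)).hasDerivWithinAt) (by simp)
    (fun s _ => (hB s).continuousAt.continuousWithinAt)
    (fun s _ => (hB s).hasDerivWithinAt)
    (fun s hs => hφ' s (Ico_subset_Icc_self hs)) ⟨ht, le_rfl⟩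

theorem Convex.le_add_inner_add_sq_of_hasFDerivAt {E : Type*} [NormedAddCommGroup E]
    [InnerProductSpace ℝ E] {Y : Set E} (hY : Convex ℝ Y) {h : E → ℝ} {G : E → E} {M : ℝ}
    (hh : ∀ y ∈ Y, HasFDerivAt h (innerSL ℝ (G y)) y)
    (hG : ∀ y₁ ∈ Y, ∀ y₂ ∈ Y, ‖G y₂ - G y₁‖ ≤ M * ‖y₂ - y₁‖)
    {a b : E} (ha : a ∈ Y) (hb : b ∈ Y) {t : ℝ} (ht : t ∈ Icc (0 : ℝ) 1) :
    h (a + t • (b - a)) ≤ h a + t * ⟪G a, b - a⟫ + M / 2 * t ^ 2 * ‖b - a‖ ^ 2 := by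
  set d := b - a
  have hmem : ∀ s ∈ Icc 0 t, a + s • d ∈ Y := fun s hs =>
    hY.add_smul_sub_mem ha hb ⟨hs.1, hs.2.trans ht.2⟩
  have hderiv : ∀ s ∈ Icc 0 t,
      HasDerivAt (fun s : ℝ => h (a + s • d)) ⟪G (a + s • d), d⟫ s := by
    intro s hs
    have hline : HasDerivAt (fun s : ℝ => a + s • d) d s := by
      simpa using ((hasDerivAt_id s).smul_const d).const_add a
    have := (hh _ (hmem s hs)).comp_hasDerivAt s hline
    rw [innerSL_apply_apply] at this
    exact this
  have hslope : ∀ s ∈ Icc 0 t,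
      ⟪G (a + s • d), d⟫ ≤ ⟪G (a + (0 : ℝ) • d), d⟫ + M * ‖d‖ ^ 2 * s := by
    intro s hs
    have hLip : ⟪G (a + s • d) - G a, d⟫ ≤ M * ‖d‖ ^ 2 * s :=
      calc ⟪G (a + s • d) - G a, d⟫ ≤ ‖G (a + s • d) - G a‖ * ‖d‖ := real_inner_le_norm _ _
        _ ≤ M * ‖s • d‖ * ‖d‖ := by
          gcongr
          simpa using hG a ha _ (hmem s hs)
        _ = M * ‖d‖ ^ 2 * s := by
          rw [norm_smul, Real.norm_of_nonneg hs.1]; ring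
    rw [inner_sub_left] at hLip
    simp only [zero_smul, add_zero]
    linarith
  have := le_add_mul_add_sq_of_hasDerivAt_le ht.1 hderiv hslope
  simp only [zero_smul, add_zero] at this
  linarith

theorem Convex.exists_le_sub_mul_add_sq_diam {E : Type*} [NormedAddCommGroup E]
    [InnerProductSpace ℝ E] {Y : Set E} (hY : Convex ℝ Y) (hYb : Bornology.IsBounded Y)
    {h : E → ℝ} {G : E → E} {M ℓ : ℝ} (hM : 0 ≤ M)
    (hh : ∀ y ∈ Y, HasFDerivAt h (innerSL ℝ (G y)) y)
    (hG : ∀ y₁ ∈ Y, ∀ y₂ ∈ Y, ‖G y₂ - G y₁‖ ≤ M * ‖y₂ - y₁‖)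
    {a : E} (ha : a ∈ Y) (hℓ : IsGreatest ((fun y => ⟪G a, a - y⟫) '' Y) ℓ)
    {t : ℝ} (ht : t ∈ Icc (0 : ℝ) 1) :
    ∃ y ∈ Y, h y ≤ h a - t * ℓ + M * Metric.diam Y ^ 2 / 2 * t ^ 2 := by
  obtain ⟨b, hb, hbℓ⟩ := hℓ.1
  refine ⟨a + t • (b - a), hY.add_smul_sub_mem ha hb ht, ?_⟩
  have hdesc := hY.le_add_inner_add_sq_of_hasFDerivAt hh hG ha hb ht
  have hslope : ⟪G a, b - a⟫ = -ℓ := by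
    rw [← neg_sub, inner_neg_right, ← hbℓ]
  have hdist : ‖b - a‖ ≤ Metric.diam Y := by
    rw [← dist_eq_norm]
    exact Metric.dist_le_diam_of_mem hYb hb ha
  have hquad : M / 2 * t ^ 2 * ‖b - a‖ ^ 2 ≤ M / 2 * t ^ 2 * Metric.diam Y ^ 2 := by
    gcongr
  rw [hslope] at hdesc
  linarith

theorem HasFDerivAt.comp_prodMk_const_innerSL {E F : Type*} [NormedAddCommGroup E]
    [InnerProductSpace ℝ E] [NormedAddCommGroup F] [InnerProductSpace ℝ F]
    {φ : E × F → ℝ} {D : E × F →L[ℝ] ℝ} {y gy : E} {x gx : F}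
    (hφ : HasFDerivAt φ D (y, x)) (hD : ∀ v, D v = ⟪gy, v.1⟫ + ⟪gx, v.2⟫) :
    HasFDerivAt (fun y' => φ (y', x)) (innerSL ℝ gy) y := by
  refine (hφ.comp y (hasFDerivAt_prodMk_left y x)).congr_fderiv ?_
  ext v
  simp [hD]

theorem norm_sub_le_of_weighted_sum {E V ι : Type*} [NormedAddCommGroup E]
    [NormedAddCommGroup V] [NormedSpace ℝ V] [Fintype ι] {Y : Set E} {G₀ : E → V}
    {G : ι → E → V} {μ : ι → ℝ} {c : V} {M₀ M U : ℝ} (hM : 0 ≤ M) (hμ : ∑ i, |μ i| ≤ U)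
    (hG₀ : ∀ y₁ ∈ Y, ∀ y₂ ∈ Y, ‖G₀ y₂ - G₀ y₁‖ ≤ M₀ * ‖y₂ - y₁‖)
    (hG : ∀ i, ∀ y₁ ∈ Y, ∀ y₂ ∈ Y, ‖G i y₂ - G i y₁‖ ≤ M * ‖y₂ - y₁‖)
    {y₁ y₂ : E} (hy₁ : y₁ ∈ Y) (hy₂ : y₂ ∈ Y) :
    ‖(G₀ y₂ + c + ∑ i, μ i • G i y₂) - (G₀ y₁ + c + ∑ i, μ i • G i y₁)‖
      ≤ (M₀ + U * M) * ‖y₂ - y₁‖ := by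
  have hsum : ‖∑ i, μ i • (G i y₂ - G i y₁)‖ ≤ U * (M * ‖y₂ - y₁‖) :=
    calc ‖∑ i, μ i • (G i y₂ - G i y₁)‖ ≤ ∑ i, |μ i| * (M * ‖y₂ - y₁‖) := by
          refine (norm_sum_le _ _).trans (Finset.sum_le_sum fun i _ => ?_)
          rw [norm_smul, Real.norm_eq_abs]
          exact mul_le_mul_of_nonneg_left (hG i y₁ hy₁ y₂ hy₂) (abs_nonneg _)
      _ = (∑ i, |μ i|) * (M * ‖y₂ - y₁‖) := (Finset.sum_mul ..).symm
      _ ≤ U * (M * ‖y₂ - y₁‖) := by gcongr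
  calc ‖(G₀ y₂ + c + ∑ i, μ i • G i y₂) - (G₀ y₁ + c + ∑ i, μ i • G i y₁)‖
      = ‖(G₀ y₂ - G₀ y₁) + ∑ i, μ i • (G i y₂ - G i y₁)‖ := by
        simp only [smul_sub, Finset.sum_sub_distrib]
        congr 1; abel
    _ ≤ M₀ * ‖y₂ - y₁‖ + U * (M * ‖y₂ - y₁‖) :=
        (norm_add_le _ _).trans (add_le_add (hG₀ y₁ hy₁ y₂ hy₂) hsum)
    _ = (M₀ + U * M) * ‖y₂ - y₁‖ := by ring

theorem hasFDerivAt_lagrangian_s4 {E H ι : Type*} [NormedAddCommGroup E] [InnerProductSpace ℝ E]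
    [CompleteSpace E] [NormedAddCommGroup H] [InnerProductSpace ℝ H] [CompleteSpace H]
    [Fintype ι] {φ₀ : E → ℝ} {φ : ι → E → ℝ} {G₀ : E} {G : ι → E} {y : E}
    (A : E →L[ℝ] H) (c lam : H) (μ : ι → ℝ)
    (hφ₀ : HasFDerivAt φ₀ (innerSL ℝ G₀) y) (hφ : ∀ i, HasFDerivAt (φ i) (innerSL ℝ (G i)) y) :
    HasFDerivAt (fun y => φ₀ y + ⟪lam, A y + c⟫ + ∑ i, μ i * φ i y)
      (innerSL ℝ (G₀ + ContinuousLinearMap.adjoint A lam + ∑ i, μ i • G i)) y := by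
  have haff : HasFDerivAt (fun y => ⟪lam, A y + c⟫)
      (innerSL ℝ (ContinuousLinearMap.adjoint A lam)) y := by
    have hlin := (((innerSL ℝ lam).comp A).hasFDerivAt (x := y)).add_const ⟪lam, c⟫
    simp only [ContinuousLinearMap.comp_apply, innerSL_apply_apply, ← inner_add_right] at hlin
    refine hlin.congr_fderiv ?_
    ext v
    simp [ContinuousLinearMap.adjoint_inner_left]
  have hsum := HasFDerivAt.fun_sum fun i (_ : i ∈ Finset.univ) => (hφ i).const_mul (μ i)
  refine ((hφ₀.fun_add haff).fun_add hsum).congr_fderiv ?_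
  simp only [map_add, map_sum, map_smul]

theorem le_sub_sq_div_of_forall_le {r ℓ K : ℝ} (hℓ : 0 ≤ ℓ)
    (hr : ∀ t ∈ Icc (0 : ℝ) 1, r ≤ ℓ - t * ℓ + K / 2 * t ^ 2) :
    (ℓ ≤ K → r ≤ ℓ - ℓ ^ 2 / (2 * K)) ∧ (K < ℓ → r ≤ ℓ / 2) := by
  refine ⟨fun hK => ?_, fun hK => ?_⟩
  · rcases hℓ.eq_or_lt with rfl | hℓpos
    · simpa using hr 0 ⟨le_rfl, zero_le_one⟩
    · have hKpos : 0 < K := hℓpos.trans_le hK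
      have := hr (ℓ / K) ⟨by positivity, (div_le_one hKpos).2 hK⟩
      convert this using 1
      field_simp
      ring
  · have := hr 1 ⟨zero_le_one, le_rfl⟩
    linarith

theorem stmt_4_general {n m q p : ℕ}
    (X : Set (EuclideanSpace ℝ (Fin m))) (Y : Set (EuclideanSpace ℝ (Fin n)))
    (hYcv : Convex ℝ Y) (hYcp : IsCompact Y)
    (A : EuclideanSpace ℝ (Fin n) →L[ℝ] EuclideanSpace ℝ (Fin q))
    (B : EuclideanSpace ℝ (Fin m) →L[ℝ] EuclideanSpace ℝ (Fin q))
    (b : EuclideanSpace ℝ (Fin q))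
    (f : EuclideanSpace ℝ (Fin n) × EuclideanSpace ℝ (Fin m) → ℝ)
    (g : Fin p → EuclideanSpace ℝ (Fin n) × EuclideanSpace ℝ (Fin m) → ℝ)
    -- partial gradients and joint differentiability of `f` and of each `g i` on `Y ×ˢ X`
    (Gfy : EuclideanSpace ℝ (Fin n) × EuclideanSpace ℝ (Fin m) → EuclideanSpace ℝ (Fin n))
    (Gfx : EuclideanSpace ℝ (Fin n) × EuclideanSpace ℝ (Fin m) → EuclideanSpace ℝ (Fin m))
    (Ggy : Fin p → EuclideanSpace ℝ (Fin n) × EuclideanSpace ℝ (Fin m) → EuclideanSpace ℝ (Fin n))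
    (Ggx : Fin p → EuclideanSpace ℝ (Fin n) × EuclideanSpace ℝ (Fin m) → EuclideanSpace ℝ (Fin m))
    (Df : EuclideanSpace ℝ (Fin n) × EuclideanSpace ℝ (Fin m) →
          EuclideanSpace ℝ (Fin n) × EuclideanSpace ℝ (Fin m) →L[ℝ] ℝ)
    (Dg : Fin p → EuclideanSpace ℝ (Fin n) × EuclideanSpace ℝ (Fin m) →
          EuclideanSpace ℝ (Fin n) × EuclideanSpace ℝ (Fin m) →L[ℝ] ℝ)
    (hfdiff : ∀ z ∈ Y ×ˢ X, HasFDerivAt f (Df z) z)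
    (hfgrad : ∀ z ∈ Y ×ˢ X, ∀ v, Df z v = ⟪Gfy z, v.1⟫ + ⟪Gfx z, v.2⟫)
    (hgdiff : ∀ i, ∀ z ∈ Y ×ˢ X, HasFDerivAt (g i) (Dg i z) z)
    (hggrad : ∀ i, ∀ z ∈ Y ×ˢ X, ∀ v, Dg i z v = ⟪Ggy i z, v.1⟫ + ⟪Ggx i z, v.2⟫)
    (M₁ M₂ U : ℝ) (hM₁ : 0 < M₁) (hM₂ : 0 < M₂)
    (hLipf : ∀ x ∈ X, ∀ y₁ ∈ Y, ∀ y₂ ∈ Y,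
      ‖Gfy (y₂, x) - Gfy (y₁, x)‖ ≤ M₁ * ‖y₂ - y₁‖)
    (hLipg : ∀ i, ∀ x ∈ X, ∀ y₁ ∈ Y, ∀ y₂ ∈ Y,
      ‖Ggy i (y₂, x) - Ggy i (y₁, x)‖ ≤ M₂ * ‖y₂ - y₁‖)
    -- value function, feasible set, dual function
    (S : EuclideanSpace ℝ (Fin m) → Set (EuclideanSpace ℝ (Fin n)))
    (hS : ∀ x, S x = {y ∈ Y | A y + B x = b ∧ ∀ i, g (i) (y, x) ≤ 0})
    (Q : EuclideanSpace ℝ (Fin m) → ℝ)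
    (θ : EuclideanSpace ℝ (Fin m) → EuclideanSpace ℝ (Fin q) → (Fin p → ℝ) → ℝ)
    (hθ : ∀ x lam mu, θ x lam mu =
      sInf ((fun y => f (y, x) + ⟪lam, A y + B x - b⟫ + ∑ i, mu i * g i (y, x)) '' Y))
    (xbar : EuclideanSpace ℝ (Fin m)) (hxbar : xbar ∈ X)
    (ε : ℝ)
    -- `ε`-optimal feasible primal solution
    (yhat : EuclideanSpace ℝ (Fin n)) (hyhatfeas : yhat ∈ S xbar)
    -- `ε`-optimal feasible dual solution
    (lamhat : EuclideanSpace ℝ (Fin q)) (muhat : Fin p → ℝ)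
    (hdualopt : θ xbar lamhat muhat ≥ Q xbar - ε)
    (hU : ∑ i, |muhat i| ≤ U)
    -- Lagrangian at `x̄`, its value and gradient at `ŷ`
    (L : EuclideanSpace ℝ (Fin n) → EuclideanSpace ℝ (Fin m) → ℝ)
    (hL : ∀ y x, L y x = f (y, x) + ⟪lamhat, A y + B x - b⟫ + ∑ i, muhat i * g i (y, x))
    (GLy : EuclideanSpace ℝ (Fin n)) (GLx : EuclideanSpace ℝ (Fin m))
    (hGLy : GLy = Gfy (yhat, xbar) + (ContinuousLinearMap.adjoint A) lamhat
      + ∑ i, muhat i • Ggy i (yhat, xbar))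
    (ℓ : ℝ)
    (hℓ : IsGreatest ((fun y => ⟪GLy, yhat - y⟫) '' Y) ℓ)
    (M₃ : ℝ) (hM₃ : M₃ = M₁ + U * M₂)
    (C : EuclideanSpace ℝ (Fin m) → ℝ)
    (hC : ∀ x, C x = L yhat xbar - ℓ + ⟪GLx, x - xbar⟫) :
    (ℓ ≤ M₃ * (Metric.diam Y) ^ 2 →
        Q xbar - C xbar ≤ ε + ℓ - ℓ ^ 2 / (2 * M₃ * (Metric.diam Y) ^ 2)) ∧
    (M₃ * (Metric.diam Y) ^ 2 < ℓ →
        Q xbar - C xbar ≤ ε + ℓ / 2) := by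
  have hyhatY : yhat ∈ Y := (hS xbar ▸ hyhatfeas).1
  have hℓ0 : 0 ≤ ℓ := hℓ.2 ⟨yhat, hyhatY, by simp⟩
  set Gy := fun y => Gfy (y, xbar) + ContinuousLinearMap.adjoint A lamhat
    + ∑ i, muhat i • Ggy i (y, xbar)
  have hLderiv : ∀ y ∈ Y, HasFDerivAt (fun y => L y xbar) (innerSL ℝ (Gy y)) y := by
    intro y hy
    have hmem : (y, xbar) ∈ Y ×ˢ X := ⟨hy, hxbar⟩
    simp only [hL, add_sub_assoc]
    exact hasFDerivAt_lagrangian_s4 A _ lamhat muhat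
      ((hfdiff _ hmem).comp_prodMk_const_innerSL (hfgrad _ hmem))
      fun i => (hgdiff i _ hmem).comp_prodMk_const_innerSL (hggrad i _ hmem)
  have hGyLip : ∀ y₁ ∈ Y, ∀ y₂ ∈ Y, ‖Gy y₂ - Gy y₁‖ ≤ M₃ * ‖y₂ - y₁‖ := fun y₁ hy₁ y₂ hy₂ =>
    hM₃ ▸ norm_sub_le_of_weighted_sum hM₂.le hU (hLipf xbar hxbar) (fun i => hLipg i xbar hxbar)
      hy₁ hy₂
  have hM₃0 : 0 ≤ M₃ := by
    have hU0 : 0 ≤ U := (Finset.sum_nonneg fun i _ => abs_nonneg (muhat i)).trans hU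
    rw [hM₃]
    positivity
  have hθle : ∀ y ∈ Y, θ xbar lamhat muhat ≤ L y xbar := by
    intro y hy
    rw [hθ]
    simp only [← hL]
    exact csInf_le (hYcp.bddBelow_image fun y hy => (hLderiv y hy).continuousAt.continuousWithinAt)
      (mem_image_of_mem _ hy)
  have hgap : ∀ t ∈ Icc (0 : ℝ) 1,
      Q xbar - C xbar - ε ≤ ℓ - t * ℓ + M₃ * Metric.diam Y ^ 2 / 2 * t ^ 2 := by
    intro t ht
    obtain ⟨y, hy, hdesc⟩ := hYcv.exists_le_sub_mul_add_sq_diam hYcp.isBounded hM₃0 hLderiv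
      hGyLip hyhatY (hGLy ▸ hℓ) ht
    have := hθle y hy
    rw [hC, sub_self, inner_zero_right, add_zero]
    linarith
  obtain ⟨hsmall, hlarge⟩ := le_sub_sq_div_of_forall_le hℓ0 hgap
  refine ⟨fun h => ?_, fun h => ?_⟩
  · have := hsmall h
    rw [mul_assoc 2]
    linarith
  · linarith [hlarge h]

/-- Inexact cut for the value function of a parametric convex program with
variable feasible set: refined gap bound under Lipschitz gradients
(Proposition `varprop2`). -/
theorem stmt_4 {n m q p : ℕ}
    (X : Set (EuclideanSpace ℝ (Fin m))) (Y : Set (EuclideanSpace ℝ (Fin n)))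
    (hXne : X.Nonempty) (hXcv : Convex ℝ X) (hXcp : IsCompact X)
    (hYne : Y.Nonempty) (hYcv : Convex ℝ Y) (hYcp : IsCompact Y)
    (A : EuclideanSpace ℝ (Fin n) →L[ℝ] EuclideanSpace ℝ (Fin q))
    (B : EuclideanSpace ℝ (Fin m) →L[ℝ] EuclideanSpace ℝ (Fin q))
    (b : EuclideanSpace ℝ (Fin q))
    (f : EuclideanSpace ℝ (Fin n) × EuclideanSpace ℝ (Fin m) → ℝ)
    (g : Fin p → EuclideanSpace ℝ (Fin n) × EuclideanSpace ℝ (Fin m) → ℝ)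
    -- partial gradients and joint differentiability of `f` and of each `g i` on `Y ×ˢ X`
    (Gfy : EuclideanSpace ℝ (Fin n) × EuclideanSpace ℝ (Fin m) → EuclideanSpace ℝ (Fin n))
    (Gfx : EuclideanSpace ℝ (Fin n) × EuclideanSpace ℝ (Fin m) → EuclideanSpace ℝ (Fin m))
    (Ggy : Fin p → EuclideanSpace ℝ (Fin n) × EuclideanSpace ℝ (Fin m) → EuclideanSpace ℝ (Fin n))
    (Ggx : Fin p → EuclideanSpace ℝ (Fin n) × EuclideanSpace ℝ (Fin m) → EuclideanSpace ℝ (Fin m))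
    (Df : EuclideanSpace ℝ (Fin n) × EuclideanSpace ℝ (Fin m) →
          EuclideanSpace ℝ (Fin n) × EuclideanSpace ℝ (Fin m) →L[ℝ] ℝ)
    (Dg : Fin p → EuclideanSpace ℝ (Fin n) × EuclideanSpace ℝ (Fin m) →
          EuclideanSpace ℝ (Fin n) × EuclideanSpace ℝ (Fin m) →L[ℝ] ℝ)
    (hfconv : ConvexOn ℝ (Y ×ˢ X) f)
    (hgconv : ∀ i, ConvexOn ℝ (Y ×ˢ X) (g i))
    (hfdiff : ∀ z ∈ Y ×ˢ X, HasFDerivAt f (Df z) z)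
    (hfgrad : ∀ z ∈ Y ×ˢ X, ∀ v, Df z v = ⟪Gfy z, v.1⟫ + ⟪Gfx z, v.2⟫)
    (hgdiff : ∀ i, ∀ z ∈ Y ×ˢ X, HasFDerivAt (g i) (Dg i z) z)
    (hggrad : ∀ i, ∀ z ∈ Y ×ˢ X, ∀ v, Dg i z v = ⟪Ggy i z, v.1⟫ + ⟪Ggx i z, v.2⟫)
    (M₁ M₂ U : ℝ) (hM₁ : 0 < M₁) (hM₂ : 0 < M₂)
    (hLipf : ∀ x ∈ X, ∀ y₁ ∈ Y, ∀ y₂ ∈ Y,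
      ‖Gfy (y₂, x) - Gfy (y₁, x)‖ ≤ M₁ * ‖y₂ - y₁‖)
    (hLipg : ∀ i, ∀ x ∈ X, ∀ y₁ ∈ Y, ∀ y₂ ∈ Y,
      ‖Ggy i (y₂, x) - Ggy i (y₁, x)‖ ≤ M₂ * ‖y₂ - y₁‖)
    -- value function, feasible set, dual function
    (S : EuclideanSpace ℝ (Fin m) → Set (EuclideanSpace ℝ (Fin n)))
    (hS : ∀ x, S x = {y ∈ Y | A y + B x = b ∧ ∀ i, g (i) (y, x) ≤ 0})
    (Q : EuclideanSpace ℝ (Fin m) → ℝ)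
    (hQ : ∀ x ∈ X, Q x = sInf ((fun y => f (y, x)) '' S x))
    (θ : EuclideanSpace ℝ (Fin m) → EuclideanSpace ℝ (Fin q) → (Fin p → ℝ) → ℝ)
    (hθ : ∀ x lam mu, θ x lam mu =
      sInf ((fun y => f (y, x) + ⟪lam, A y + B x - b⟫ + ∑ i, mu i * g i (y, x)) '' Y))
    -- strong duality at every `x ∈ X`
    (hstrong : ∀ x ∈ X,
      IsLUB {v : ℝ | ∃ lam mu, (∀ i, 0 ≤ mu i) ∧ v = θ x lam mu} (Q x))
    (xbar : EuclideanSpace ℝ (Fin m)) (hxbar : xbar ∈ X)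
    (ε : ℝ) (hε : 0 ≤ ε)
    -- `ε`-optimal feasible primal solution
    (yhat : EuclideanSpace ℝ (Fin n)) (hyhatfeas : yhat ∈ S xbar)
    (hyhatopt : f (yhat, xbar) ≤ Q xbar + ε)
    -- `ε`-optimal feasible dual solution
    (lamhat : EuclideanSpace ℝ (Fin q)) (muhat : Fin p → ℝ)
    (hmuhat : ∀ i, 0 ≤ muhat i)
    (hdualopt : θ xbar lamhat muhat ≥ Q xbar - ε)
    (hU : ∑ i, |muhat i| ≤ U)
    -- Lagrangian at `x̄`, its value and gradient at `ŷ`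
    (L : EuclideanSpace ℝ (Fin n) → EuclideanSpace ℝ (Fin m) → ℝ)
    (hL : ∀ y x, L y x = f (y, x) + ⟪lamhat, A y + B x - b⟫ + ∑ i, muhat i * g i (y, x))
    (GLy : EuclideanSpace ℝ (Fin n)) (GLx : EuclideanSpace ℝ (Fin m))
    (hGLy : GLy = Gfy (yhat, xbar) + (ContinuousLinearMap.adjoint A) lamhat
      + ∑ i, muhat i • Ggy i (yhat, xbar))
    (hGLx : GLx = Gfx (yhat, xbar) + (ContinuousLinearMap.adjoint B) lamhat
      + ∑ i, muhat i • Ggx i (yhat, xbar))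
    (ℓ : ℝ)
    (hℓ : IsGreatest ((fun y => ⟪GLy, yhat - y⟫) '' Y) ℓ)
    (M₃ : ℝ) (hM₃ : M₃ = M₁ + U * M₂)
    (C : EuclideanSpace ℝ (Fin m) → ℝ)
    (hC : ∀ x, C x = L yhat xbar - ℓ + ⟪GLx, x - xbar⟫) :
    (ℓ ≤ M₃ * (Metric.diam Y) ^ 2 →
        Q xbar - C xbar ≤ ε + ℓ - ℓ ^ 2 / (2 * M₃ * (Metric.diam Y) ^ 2)) ∧
    (M₃ * (Metric.diam Y) ^ 2 < ℓ →
        Q xbar - C xbar ≤ ε + ℓ / 2) :=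
  stmt_4_general X Y hYcv hYcp A B b f g Gfy Gfx Ggy Ggx Df Dg hfdiff hfgrad hgdiff hggrad M₁ M₂ U
    hM₁ hM₂ hLipf hLipg S hS Q θ hθ xbar hxbar ε yhat hyhatfeas lamhat muhat hdualopt hU L hL GLy
    GLx hGLy ℓ hℓ M₃ hM₃ C hC
end

section
/- Let $\mathcal{X}_{t-1}, \mathcal{X}_t$ be nonempty convex compact sets, $\varepsilon > 0$, and suppose: each component of $g_t$ is convex on $\mathcal{X}_t \times \mathcal{X}_{t-1}^{\varepsilon}$ (the $\varepsilon$-fattening); for every $x_{t-1} \in \mathcal{X}_{t-1}^{\varepsilon}$ there exists $x_t \in \mathrm{ri}(\mathcal{X}_t)$ with $A_t x_t + B_t x_{t-1} = b_t$ and $g_t(x_t, x_{t-1}) \le 0$; and there exists $(\bar x_{tt}, \bar x_{t,t-1}) \in \mathrm{ri}(\mathcal{X}_t) \times \mathcal{X}_{t-1}$ with $A_t \bar x_{tt} + B_t \bar x_{t,t-1} = b_t$ and $g_t(\bar x_{tt}, \bar x_{t,t-1}) < 0$. Then for every $x_{t-1}^k \in \mathcal{X}_{t-1}$ there exists $\tilde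 x_t \in \mathrm{ri}(\mathcal{X}_t)$ with $A_t \tilde x_t + B_t x_{t-1}^k = b_t$ and $g_t(\tilde x_t, x_{t-1}^k) < 0$. -/
/-!
The segment from the strictly feasible parameter `x̄` through `xᵏ`, prolonged by `ε`, ends at a
point `z` of the fattened set, where some `y ∈ ri 𝒳ₜ` is feasible. Writing `xᵏ` as an interior
point `s • x̄ + t • z` of that segment, the pair `(s • x̄ₜ + t • y, xᵏ)` satisfies the affine
constraint, is strictly feasible for the convex `gᵢ` because `s > 0`, and its first component
stays in `ri 𝒳ₜ` because `x̄ₜ` does.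
-/

open Set Metric

theorem Convex.combo_intrinsicInterior_self_mem_intrinsicInterior
    {E : Type*} [NormedAddCommGroup E] [NormedSpace ℝ E] {s : Set E} (hs : Convex ℝ s)
    {x y : E} (hx : x ∈ intrinsicInterior ℝ s) (hy : y ∈ s) {a b : ℝ} (ha : 0 < a) (hb : 0 ≤ b)
    (hab : a + b = 1) : a • x + b • y ∈ intrinsicInterior ℝ s := by
  obtain ⟨x', hx', rfl⟩ := hx
  let y' : affineSpan ℝ s := ⟨y, subset_affineSpan ℝ s hy⟩
  have : Nonempty (affineSpan ℝ s) := ⟨y'⟩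
  -- Translating by `y` identifies the affine span with its direction, a normed space, where
  -- the statement for ordinary interiors is available.
  let e := AffineIsometryEquiv.vaddConst ℝ y'
  have he : ∀ t, interior (e ⁻¹' t) = e ⁻¹' interior t := fun t =>
    (e.toHomeomorph.preimage_interior t).symm
  have hconv : Convex ℝ (e ⁻¹' ((↑) ⁻¹' s)) :=
    hs.affine_preimage ((affineSpan ℝ s).subtype.comp e.toAffineEquiv.toAffineMap)
  have h0 : (0 : (affineSpan ℝ s).direction) ∈ e ⁻¹' ((↑) ⁻¹' s) := by simpa [e] using hy
  have hx'' : e.symm x' ∈ interior (e ⁻¹' ((↑) ⁻¹' s)) := by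
    rw [he]; simpa using hx'
  have hcombo := hconv.combo_interior_self_mem_interior hx'' h0 ha hb hab
  rw [he] at hcombo
  refine ⟨_, hcombo, ?_⟩
  simp only [e, y', AffineIsometryEquiv.coe_vaddConst_symm, AffineIsometryEquiv.coe_vaddConst,
    smul_zero, add_zero, AffineSubspace.coe_vadd, SetLike.val_smul, AffineSubspace.coe_vsub,
    vsub_eq_sub, vadd_eq_add]
  rw [eq_sub_of_add_eq' hab]
  module

theorem exists_norm_sub_le_mem_openSegment {E : Type*} [NormedAddCommGroup E] [NormedSpace ℝ E]
    (x₀ x : E) {ε : ℝ} (hε : 0 < ε) : ∃ z, ‖z - x‖ ≤ ε ∧ x ∈ openSegment ℝ x₀ z := by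
  by_cases hx : x = x₀
  · subst hx
    exact ⟨x, by simpa using hε.le, by simp [openSegment_same]⟩
  set d := ‖x - x₀‖
  have hd : 0 < d := norm_pos_iff.mpr (sub_ne_zero.mpr hx)
  refine ⟨x + (ε / d) • (x - x₀), ?_, ε / (d + ε), d / (d + ε), by positivity, by positivity,
    by field_simp; ring, ?_⟩
  · rw [add_sub_cancel_left, norm_smul, Real.norm_of_nonneg (by positivity),
      div_mul_cancel₀ _ hd.ne']
  · match_scalars <;> field_simp
    ring

theorem ConvexOn.neg_of_mem_openSegment {E : Type*} [AddCommGroup E] [Module ℝ E] {s : Set E}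
    {f : E → ℝ} (hf : ConvexOn ℝ s f) {x y z : E} (hx : x ∈ s) (hy : y ∈ s) (hfx : f x < 0)
    (hfy : f y ≤ 0) (hz : z ∈ openSegment ℝ x y) : f z < 0 := by
  obtain ⟨a, b, ha, hb, hab, rfl⟩ := hz
  calc f (a • x + b • y) ≤ a * f x + b * f y := hf.2 hx hy ha.le hb.le hab
    _ < 0 := by nlinarith

theorem stmt_9_general {n q p : ℕ}
    (Xprev Xt : Set (EuclideanSpace ℝ (Fin n)))
    (hXtcv : Convex ℝ Xt)
    (ε : ℝ) (hε : 0 < ε)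
    (Xprevε : Set (EuclideanSpace ℝ (Fin n)))
    (hXprevε : Xprevε = {x | ∃ u ∈ Xprev, ‖x - u‖ ≤ ε})
    (A B : EuclideanSpace ℝ (Fin n) →L[ℝ] EuclideanSpace ℝ (Fin q))
    (b : EuclideanSpace ℝ (Fin q))
    (g : Fin p → EuclideanSpace ℝ (Fin n) × EuclideanSpace ℝ (Fin n) → ℝ)
    (hgconv : ∀ i, ConvexOn ℝ (Xt ×ˢ Xprevε) (g i))
    (hfeas : ∀ x ∈ Xprevε, ∃ y ∈ intrinsicInterior ℝ Xt,
      A y + B x = b ∧ ∀ i, g i (y, x) ≤ 0)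
    (xbt : EuclideanSpace ℝ (Fin n)) (xbprev : EuclideanSpace ℝ (Fin n))
    (hxbt : xbt ∈ intrinsicInterior ℝ Xt) (hxbprev : xbprev ∈ Xprev)
    (hxbeq : A xbt + B xbprev = b) (hxblt : ∀ i, g i (xbt, xbprev) < 0) :
    ∀ xk ∈ Xprev, ∃ xtil ∈ intrinsicInterior ℝ Xt,
      A xtil + B xk = b ∧ ∀ i, g i (xtil, xk) < 0 := by
  intro xk hxk
  have hxbprevε : xbprev ∈ Xprevε := hXprevε ▸ ⟨xbprev, hxbprev, by simpa using hε.le⟩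
  obtain ⟨z, hzxk, hxkseg⟩ := exists_norm_sub_le_mem_openSegment xbprev xk hε
  have hzε : z ∈ Xprevε := hXprevε ▸ ⟨xk, hxk, hzxk⟩
  obtain ⟨y, hy, hyeq, hyg⟩ := hfeas z hzε
  obtain ⟨s, t, hs, ht, hst, rfl⟩ := hxkseg
  refine ⟨s • xbt + t • y, hXtcv.combo_intrinsicInterior_self_mem_intrinsicInterior hxbt
    (intrinsicInterior_subset hy) hs ht.le hst, ?_, fun i => ?_⟩
  · calc A (s • xbt + t • y) + B (s • xbprev + t • z)
        = s • (A xbt + B xbprev) + t • (A y + B z) := by simp only [map_add, map_smul]; module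
      _ = b := by rw [hxbeq, hyeq, ← add_smul, hst, one_smul]
  · have hseg : (s • xbt + t • y, s • xbprev + t • z) ∈ openSegment ℝ (xbt, xbprev) (y, z) :=
      ⟨s, t, hs, ht, hst, by simp⟩
    exact (hgconv i).neg_of_mem_openSegment ⟨intrinsicInterior_subset hxbt, hxbprevε⟩
      ⟨intrinsicInterior_subset hy, hzε⟩ (hxblt i) (hyg i) hseg

/-- Propagation of a Slater condition (Lemma `boundcutcoeff`): a single strictly
feasible pair plus relaxed feasibility on an `ε`-fattened parameter set yields a
Slater point at every parameter value. -/
theorem stmt_9 {n q p : ℕ}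
    (Xprev Xt : Set (EuclideanSpace ℝ (Fin n)))
    (hXprevne : Xprev.Nonempty) (hXprevcv : Convex ℝ Xprev) (hXprevcp : IsCompact Xprev)
    (hXtne : Xt.Nonempty) (hXtcv : Convex ℝ Xt) (hXtcp : IsCompact Xt)
    (ε : ℝ) (hε : 0 < ε)
    (Xprevε : Set (EuclideanSpace ℝ (Fin n)))
    (hXprevε : Xprevε = {x | ∃ u ∈ Xprev, ‖x - u‖ ≤ ε})
    (A B : EuclideanSpace ℝ (Fin n) →L[ℝ] EuclideanSpace ℝ (Fin q))
    (b : EuclideanSpace ℝ (Fin q))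
    (g : Fin p → EuclideanSpace ℝ (Fin n) × EuclideanSpace ℝ (Fin n) → ℝ)
    (hgconv : ∀ i, ConvexOn ℝ (Xt ×ˢ Xprevε) (g i))
    (hfeas : ∀ x ∈ Xprevε, ∃ y ∈ intrinsicInterior ℝ Xt,
      A y + B x = b ∧ ∀ i, g i (y, x) ≤ 0)
    (xbt : EuclideanSpace ℝ (Fin n)) (xbprev : EuclideanSpace ℝ (Fin n))
    (hxbt : xbt ∈ intrinsicInterior ℝ Xt) (hxbprev : xbprev ∈ Xprev)
    (hxbeq : A xbt + B xbprev = b) (hxblt : ∀ i, g i (xbt, xbprev) < 0) :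
    ∀ xk ∈ Xprev, ∃ xtil ∈ intrinsicInterior ℝ Xt,
      A xtil + B xk = b ∧ ∀ i, g i (xtil, xk) < 0 :=
  stmt_9_general Xprev Xt hXtcv ε hε Xprevε hXprevε A B b g hgconv hfeas xbt xbprev hxbt hxbprev
    hxbeq hxblt
end

section
/- Consider dynamic programming equations $\mathcal{Q}_t(x_{t-1}) = \inf\{f_t(x_t, x_{t-1}) + \mathcal{Q}_{t+1}(x_t) : x_t \in X_t(x_{t-1})\}$ for $t = 1, \ldots, T$ with $\mathcal{Q}_{T+1} \equiv 0$, where each $\mathcal{X}_t$ is nonempty convex compact, each $f_t$ is convex and continuously differentiable on $\mathcal{X}_t \times \mathcal{X}_{t-1}$, and for constraint sets of type S2 the functions $g_{ti}$ are convex and continuously differentiable, with $X_t(x_{t-1}) \cap \mathrm{ri}(\mathcal{X}_t) \ne \emptyset$ for all $x_{t-1}$ in an $\varepsilon$-fattening of $\mathcal{X}_{t-1}$. Then for every $t = 2, \ldots, T+1$, the function $\mathcal{Q}_t$ is convex and Lipschitz continuous on $\mathcal{X}_{t-1}$. -/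
open Set Metric

/-!
Backward induction on `t`. Each `Q t` is the value function `x ↦ inf {φ (y, x) | y ∈ X x}` of a
jointly convex parametric problem: `φ = f t + Q (t + 1) ∘ fst` is convex and Lipschitz on
`𝒳 t ×ˢ 𝒳 (t - 1)`, and the graph of the feasible-set map over the `ε`-fattening of `𝒳 (t - 1)`
is convex. Joint convexity makes the value function convex. For the Lipschitz bound, given `x, x'`
and `y ∈ X x`, go past `x'` to the point `x''` at distance `ε` on the ray from `x`, pick any
`y'' ∈ X x''`, and interpolate between `y` and `y''`: this gives `y' ∈ X x'` with
`‖y' - y‖ ≤ diam (𝒳 t) / ε * ‖x' - x‖`, hence `Q t x' ≤ Q t x + L (diam (𝒳 t) / ε + 1) ‖x' - x‖`.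
-/

section ValueFunction

variable {E F : Type*} {P Pε : Set E} {D : Set F} {X : E → Set F} {φ : F × E → ℝ} {ε : ℝ}

noncomputable def valueFun (φ : F × E → ℝ) (X : E → Set F) (x : E) : ℝ :=
  sInf ((fun y => φ (y, x)) '' X x)

lemma valueFun_le {x : E} {y : F} (hb : BddBelow ((fun y => φ (y, x)) '' X x))
    (hy : y ∈ X x) : valueFun φ X x ≤ φ (y, x) :=
  csInf_le hb (mem_image_of_mem _ hy)

lemma exists_lt_valueFun_add {x : E} (hX : (X x).Nonempty) {δ : ℝ} (hδ : 0 < δ) :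
    ∃ y ∈ X x, φ (y, x) < valueFun φ X x + δ := by
  obtain ⟨_, ⟨y, hy, rfl⟩, hlt⟩ :=
    exists_lt_of_csInf_lt (hX.image _) (lt_add_of_pos_right (valueFun φ X x) hδ)
  exact ⟨y, hy, hlt⟩

lemma bddBelow_image_of_isCompact [TopologicalSpace E] [TopologicalSpace F] (hD : IsCompact D)
    (hP : IsCompact P) (hφ : ContinuousOn φ (D ×ˢ P)) (hXD : ∀ x ∈ P, X x ⊆ D) {x : E} (hx : x ∈ P) :
    BddBelow ((fun y => φ (y, x)) '' X x) :=
  ((hD.prod hP).bddBelow_image hφ).mono <| by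
    rintro _ ⟨y, hy, rfl⟩
    exact mem_image_of_mem φ ⟨hXD x hx hy, hx⟩

section Normed

variable [NormedAddCommGroup E] [NormedSpace ℝ E] [NormedAddCommGroup F] [NormedSpace ℝ F]

theorem convexOn_valueFun (hP : Convex ℝ P) (hPPε : P ⊆ Pε)
    (hX : Convex ℝ {z : F × E | z.2 ∈ Pε ∧ z.1 ∈ X z.2}) (hXD : ∀ x ∈ P, X x ⊆ D)
    (hXne : ∀ x ∈ P, (X x).Nonempty) (hb : ∀ x ∈ P, BddBelow ((fun y => φ (y, x)) '' X x))
    (hφ : ConvexOn ℝ (D ×ˢ P) φ) : ConvexOn ℝ P (valueFun φ X) := by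
  refine ⟨hP, fun x₁ hx₁ x₂ hx₂ a c ha hc hac => ?_⟩
  simp only [smul_eq_mul]
  refine le_of_forall_pos_le_add fun δ hδ => ?_
  obtain ⟨y₁, hy₁, h₁⟩ := exists_lt_valueFun_add (hXne x₁ hx₁) hδ
  obtain ⟨y₂, hy₂, h₂⟩ := exists_lt_valueFun_add (hXne x₂ hx₂) hδ
  have hy : a • y₁ + c • y₂ ∈ X (a • x₁ + c • x₂) :=
    (hX (x := (y₁, x₁)) ⟨hPPε hx₁, hy₁⟩ (y := (y₂, x₂)) ⟨hPPε hx₂, hy₂⟩ ha hc hac).2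
  calc valueFun φ X (a • x₁ + c • x₂)
      ≤ φ (a • (y₁, x₁) + c • (y₂, x₂)) := valueFun_le (hb _ (hP hx₁ hx₂ ha hc hac)) hy
    _ ≤ a * φ (y₁, x₁) + c * φ (y₂, x₂) :=
      hφ.2 ⟨hXD x₁ hx₁ hy₁, hx₁⟩ ⟨hXD x₂ hx₂ hy₂, hx₂⟩ ha hc hac
    _ ≤ a * (valueFun φ X x₁ + δ) + c * (valueFun φ X x₂ + δ) := by gcongr
    _ = a * valueFun φ X x₁ + c * valueFun φ X x₂ + δ := by linear_combination δ * hac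

lemma exists_mem_norm_sub_le (hε : 0 < ε) (hD : Bornology.IsBounded D)
    (hXD : ∀ x ∈ Pε, X x ⊆ D) (hXne : ∀ x ∈ Pε, (X x).Nonempty)
    (hX : Convex ℝ {z : F × E | z.2 ∈ Pε ∧ z.1 ∈ X z.2}) {x x' : E} (hx : x ∈ Pε)
    (hx' : closedBall x' ε ⊆ Pε) {y : F} (hy : y ∈ X x) :
    ∃ y' ∈ X x', ‖y' - y‖ ≤ diam D / ε * ‖x' - x‖ := by
  rcases eq_or_ne x' x with rfl | hne
  · exact ⟨y, hy, by simp⟩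
  set d := ‖x' - x‖
  have hd : 0 < d := norm_pos_iff.mpr (sub_ne_zero.mpr hne)
  set x'' := x' + (ε / d) • (x' - x)
  have hx'' : x'' ∈ Pε := hx' <| by
    rw [mem_closedBall, dist_eq_norm, add_sub_cancel_left, norm_smul,
      Real.norm_of_nonneg (by positivity), div_mul_cancel₀ _ hd.ne']
  obtain ⟨y'', hy''⟩ := hXne x'' hx''
  set θ := d / (d + ε)
  have hθ : 0 ≤ θ := by positivity
  have hθ' : θ ≤ d / ε := div_le_div_of_nonneg_left hd.le hε (by linarith)
  have hx'θ : (1 - θ) • x + θ • x'' = x' := by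
    have : θ * (1 + ε / d) = 1 := by simp only [θ]; field_simp
    rw [show (1 - θ) • x + θ • x'' = x' + (θ * (1 + ε / d) - 1) • (x' - x) by module, this,
      sub_self, zero_smul, add_zero]
  have hθ1 : θ ≤ 1 := div_le_one_of_le₀ (by linarith) (by positivity)
  have hmem := hX (x := (y, x)) ⟨hx, hy⟩ (y := (y'', x'')) ⟨hx'', hy''⟩ (sub_nonneg.2 hθ1) hθ
    (sub_add_cancel 1 θ)
  refine ⟨(1 - θ) • y + θ • y'', by simpa [hx'θ] using hmem.2, ?_⟩
  calc ‖(1 - θ) • y + θ • y'' - y‖ = θ * ‖y'' - y‖ := by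
        rw [show (1 - θ) • y + θ • y'' - y = θ • (y'' - y) by module, norm_smul,
          Real.norm_of_nonneg hθ]
    _ ≤ d / ε * diam D := by
        gcongr
        rw [← dist_eq_norm]
        exact dist_le_diam_of_mem hD (hXD _ hx'' hy'') (hXD _ hx hy)
    _ = diam D / ε * d := by ring

theorem lipschitzOnWith_valueFun {L : NNReal} (hε : 0 < ε) (hPε : ∀ x ∈ P, closedBall x ε ⊆ Pε)
    (hD : Bornology.IsBounded D) (hXD : ∀ x ∈ Pε, X x ⊆ D) (hXne : ∀ x ∈ Pε, (X x).Nonempty)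
    (hX : Convex ℝ {z : F × E | z.2 ∈ Pε ∧ z.1 ∈ X z.2})
    (hb : ∀ x ∈ P, BddBelow ((fun y => φ (y, x)) '' X x)) (hφ : LipschitzOnWith L φ (D ×ˢ P)) :
    LipschitzOnWith (L * (diam D / ε + 1)).toNNReal (valueFun φ X) P := by
  refine LipschitzOnWith.of_le_add_mul' _ fun x' hx' x hx => le_of_forall_pos_le_add fun δ hδ => ?_
  have hxPε : x ∈ Pε := hPε x hx (mem_closedBall_self hε.le)
  obtain ⟨y, hy, hyδ⟩ := exists_lt_valueFun_add (hXne x hxPε) hδ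
  obtain ⟨y', hy', hyy'⟩ := exists_mem_norm_sub_le hε hD hXD hXne hX hxPε (hPε x' hx') hy
  have hdist : dist (y', x') (y, x) ≤ (diam D / ε + 1) * dist x' x := by
    rw [Prod.dist_eq, dist_eq_norm, dist_eq_norm x']
    linarith [max_le_add_of_nonneg (norm_nonneg (y' - y)) (norm_nonneg (x' - x))]
  have hy'D : y' ∈ D := hXD x' (hPε x' hx' (mem_closedBall_self hε.le)) hy'
  calc valueFun φ X x' ≤ φ (y', x') := valueFun_le (hb x' hx') hy'
    _ ≤ φ (y, x) + L * dist (y', x') (y, x) := hφ.le_add_mul ⟨hy'D, hx'⟩ ⟨hXD x hxPε hy, hx⟩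
    _ ≤ valueFun φ X x + δ + L * ((diam D / ε + 1) * dist x' x) := by gcongr
    _ = valueFun φ X x + L * (diam D / ε + 1) * dist x' x + δ := by ring

theorem convexOn_valueFun_and_lipschitzOnWith {L : NNReal} (hD : IsCompact D) (hP : Convex ℝ P)
    (hPc : IsCompact P) (hε : 0 < ε) (hPε : ∀ x ∈ P, closedBall x ε ⊆ Pε)
    (hXD : ∀ x ∈ Pε, X x ⊆ D) (hXne : ∀ x ∈ Pε, (X x).Nonempty)
    (hX : Convex ℝ {z : F × E | z.2 ∈ Pε ∧ z.1 ∈ X z.2}) (hφc : ConvexOn ℝ (D ×ˢ P) φ)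
    (hφl : LipschitzOnWith L φ (D ×ˢ P)) :
    ConvexOn ℝ P (valueFun φ X) ∧ ∃ K, LipschitzOnWith K (valueFun φ X) P := by
  have hPPε : P ⊆ Pε := fun x hx => hPε x hx (mem_closedBall_self hε.le)
  have hb : ∀ x ∈ P, BddBelow ((fun y => φ (y, x)) '' X x) :=
    fun x => bddBelow_image_of_isCompact hD hPc hφl.continuousOn fun x hx => hXD x (hPPε hx)
  exact ⟨convexOn_valueFun hP hPPε hX (fun x hx => hXD x (hPPε hx))
      (fun x hx => hXne x (hPPε hx)) hb hφc,
    _, lipschitzOnWith_valueFun hε hPε hD.isBounded hXD hXne hX hb hφl⟩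

lemma ConvexOn.comp_fst_prod {q : F → ℝ} (hq : ConvexOn ℝ D q) (hP : Convex ℝ P) :
    ConvexOn ℝ (D ×ˢ P) (fun z => q z.1) :=
  ⟨hq.1.prod hP, fun _ hz₁ _ hz₂ _ _ ha hc hac => hq.2 hz₁.1 hz₂.1 ha hc hac⟩

lemma convex_setOf_exists_norm_sub_le (hP : Convex ℝ P) (ε : ℝ) :
    Convex ℝ {x | ∃ u ∈ P, ‖x - u‖ ≤ ε} := by
  convert hP.add (convex_closedBall (0 : E) ε) using 1
  ext x
  simp only [mem_ofPred_eq, mem_add, mem_closedBall_zero_iff]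
  exact ⟨fun ⟨u, hu, h⟩ => ⟨u, hu, x - u, h, add_sub_cancel u x⟩,
    fun ⟨u, hu, v, hv, h⟩ => ⟨u, hu, by rwa [← h, add_sub_cancel_left]⟩⟩

lemma convex_setOf_feasible {G ι : Type*} [AddCommGroup G] [Module ℝ G] [TopologicalSpace G]
    (S : Bool) {K : Set F} (hK : Convex ℝ K) (hP : Convex ℝ P) (A : F →L[ℝ] G) (B : E →L[ℝ] G)
    (b : G) {g : ι → F × E → ℝ} (hg : S = true → ∀ i, ConvexOn ℝ (K ×ˢ P) (g i)) :
    Convex ℝ {z : F × E | z.2 ∈ P ∧ z.1 ∈ if S = true then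
      {y ∈ K | A y + B z.2 = b ∧ ∀ i, g i (y, z.2) ≤ 0} else K} := by
  cases S
  · convert hK.prod hP using 1
    ext
    simp [and_comm]
  simp only [if_true]
  rintro ⟨y₁, x₁⟩ ⟨hx₁, hy₁, hA₁, hg₁⟩ ⟨y₂, x₂⟩ ⟨hx₂, hy₂, hA₂, hg₂⟩ a c ha hc hac
  refine ⟨hP hx₁ hx₂ ha hc hac, hK hy₁ hy₂ ha hc hac, ?_, fun i => ?_⟩
  · calc A (a • y₁ + c • y₂) + B (a • x₁ + c • x₂) = a • (A y₁ + B x₁) + c • (A y₂ + B x₂) := by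
          simp only [map_add, map_smul]; module
      _ = b := by rw [hA₁, hA₂, ← add_smul, hac, one_smul]
  · exact ((hg rfl i).convex_le 0 ⟨⟨hy₁, hx₁⟩, hg₁ i⟩ ⟨⟨hy₂, hx₂⟩, hg₂ i⟩ ha hc hac).2

end Normed

end ValueFunction

theorem stmt_10_general {n q p : ℕ} (T : ℕ)
    (𝒳 : ℕ → Set (EuclideanSpace ℝ (Fin n)))
    (h𝒳 : ∀ t, t ≤ T → (𝒳 t).Nonempty ∧ Convex ℝ (𝒳 t) ∧ IsCompact (𝒳 t))
    (S2 : ℕ → Bool)  -- whether the constraint set of stage `t` is of type S2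
    (f : ℕ → EuclideanSpace ℝ (Fin n) × EuclideanSpace ℝ (Fin n) → ℝ)
    (g : ℕ → Fin p → EuclideanSpace ℝ (Fin n) × EuclideanSpace ℝ (Fin n) → ℝ)
    (A B : ℕ → (EuclideanSpace ℝ (Fin n) →L[ℝ] EuclideanSpace ℝ (Fin q)))
    (b : ℕ → EuclideanSpace ℝ (Fin q))
    (ε : ℝ) (hε : 0 < ε)
    -- (H1)-(b): `f t` convex and `C¹` on `𝒳 t ×ˢ 𝒳 (t-1)`
    (hfconv : ∀ t, 1 ≤ t → t ≤ T → ConvexOn ℝ (𝒳 t ×ˢ 𝒳 (t - 1)) (f t))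
    (hfC1 : ∀ t, 1 ≤ t → t ≤ T → ContDiffOn ℝ 1 (f t) (𝒳 t ×ˢ 𝒳 (t - 1)))
    -- (H1)-(c): for type-S2 stages, each `g t i` convex on the fattened set and `C¹`
    (hgconv : ∀ t, 1 ≤ t → t ≤ T → S2 t = true → ∀ i,
      ConvexOn ℝ (𝒳 t ×ˢ {x | ∃ u ∈ 𝒳 (t - 1), ‖x - u‖ ≤ ε}) (g t i))
    -- the (possibly parameter-dependent) feasible sets
    (Xset : ℕ → EuclideanSpace ℝ (Fin n) → Set (EuclideanSpace ℝ (Fin n)))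
    (hXset : ∀ t x, Xset t x = if S2 t = true then
        {y ∈ 𝒳 t | A t y + B t x = b t ∧ ∀ i, g t i (y, x) ≤ 0}
      else 𝒳 t)
    -- (H1)-(d): relaxed feasibility on the `ε`-fattening of `𝒳 (t-1)`
    (hfeas : ∀ t, 1 ≤ t → t ≤ T → S2 t = true →
      ∀ x ∈ {x | ∃ u ∈ 𝒳 (t - 1), ‖x - u‖ ≤ ε},
        (Xset t x ∩ intrinsicInterior ℝ (𝒳 t)).Nonempty)
    -- the dynamic programming equations
    (Q : ℕ → EuclideanSpace ℝ (Fin n) → ℝ)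
    (hQT : ∀ x, Q (T + 1) x = 0)
    (hQ : ∀ t, 1 ≤ t → t ≤ T → ∀ x,
      Q t x = sInf ((fun y => f t (y, x) + Q (t + 1) y) '' Xset t x)) :
    ∀ t, 2 ≤ t → t ≤ T + 1 →
      ConvexOn ℝ (𝒳 (t - 1)) (Q t) ∧
      ∃ K : NNReal, LipschitzOnWith K (Q t) (𝒳 (t - 1)) := by
  intro t ht htT
  induction htT using Nat.decreasingInduction with
  | self =>
    rw [Nat.add_sub_cancel, funext hQT]
    exact ⟨convexOn_const 0 (h𝒳 T le_rfl).2.1, 0, (LipschitzWith.const 0).lipschitzOnWith⟩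
  | of_succ t htT ih =>
    obtain ⟨hQconv, Kq, hQlip⟩ := ih (by omega)
    rw [Nat.add_sub_cancel] at hQconv hQlip
    obtain ⟨ht1, htT⟩ : 1 ≤ t ∧ t ≤ T := by omega
    obtain ⟨hne, hconv, hcpt⟩ := h𝒳 t htT
    obtain ⟨-, hconv', hcpt'⟩ := h𝒳 (t - 1) (by omega)
    set Pε := {x | ∃ u ∈ 𝒳 (t - 1), ‖x - u‖ ≤ ε}
    have hX : Convex ℝ {z : EuclideanSpace ℝ (Fin n) × EuclideanSpace ℝ (Fin n) |
        z.2 ∈ Pε ∧ z.1 ∈ Xset t z.2} := by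
      simpa only [hXset] using convex_setOf_feasible (S2 t) hconv
        (convex_setOf_exists_norm_sub_le hconv' ε) (A t) (B t) (b t) (hgconv t ht1 htT)
    have hXne : ∀ x ∈ Pε, (Xset t x).Nonempty := fun x hx => by
      cases h : S2 t
      · simpa [hXset, h] using hne
      · exact (hfeas t ht1 htT h x hx).mono inter_subset_left
    obtain ⟨Kf, hfLip⟩ := (hfC1 t ht1 htT).exists_lipschitzOnWith one_ne_zero
      (hconv.prod hconv') (hcpt.prod hcpt')
    rw [show Q t = valueFun (fun z => f t z + Q (t + 1) z.1) (Xset t) from funext (hQ t ht1 htT)]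
    exact convexOn_valueFun_and_lipschitzOnWith hcpt hconv' hcpt' hε
      (fun x hx y hy => show y ∈ Pε from ⟨x, hx, mem_closedBall_iff_norm.1 hy⟩)
      (fun x _ => by rw [hXset]; split_ifs; exacts [sep_subset _ _, subset_rfl]) hXne hX
      ((hfconv t ht1 htT).add (hQconv.comp_fst_prod hconv'))
      (hfLip.add (hQlip.comp LipschitzWith.prod_fst.lipschitzOnWith fun _ hz => hz.1))

/-- Convexity and Lipschitz continuity of the cost-to-go functions of the
deterministic dynamic programming equations (Lemma `convrecfuncQt`). -/
theorem stmt_10 {n q p : ℕ} (T : ℕ) (hT : 1 ≤ T)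
    (x₀ : EuclideanSpace ℝ (Fin n))
    (𝒳 : ℕ → Set (EuclideanSpace ℝ (Fin n)))
    (h𝒳0 : 𝒳 0 = {x₀})
    (h𝒳 : ∀ t, t ≤ T → (𝒳 t).Nonempty ∧ Convex ℝ (𝒳 t) ∧ IsCompact (𝒳 t))
    (S2 : ℕ → Bool)  -- whether the constraint set of stage `t` is of type S2
    (f : ℕ → EuclideanSpace ℝ (Fin n) × EuclideanSpace ℝ (Fin n) → ℝ)
    (g : ℕ → Fin p → EuclideanSpace ℝ (Fin n) × EuclideanSpace ℝ (Fin n) → ℝ)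
    (A B : ℕ → (EuclideanSpace ℝ (Fin n) →L[ℝ] EuclideanSpace ℝ (Fin q)))
    (b : ℕ → EuclideanSpace ℝ (Fin q))
    (ε : ℝ) (hε : 0 < ε)
    -- (H1)-(b): `f t` convex and `C¹` on `𝒳 t ×ˢ 𝒳 (t-1)`
    (hfconv : ∀ t, 1 ≤ t → t ≤ T → ConvexOn ℝ (𝒳 t ×ˢ 𝒳 (t - 1)) (f t))
    (hfC1 : ∀ t, 1 ≤ t → t ≤ T → ContDiffOn ℝ 1 (f t) (𝒳 t ×ˢ 𝒳 (t - 1)))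
    -- (H1)-(c): for type-S2 stages, each `g t i` convex on the fattened set and `C¹`
    (hgconv : ∀ t, 1 ≤ t → t ≤ T → S2 t = true → ∀ i,
      ConvexOn ℝ (𝒳 t ×ˢ {x | ∃ u ∈ 𝒳 (t - 1), ‖x - u‖ ≤ ε}) (g t i))
    (hgC1 : ∀ t, 1 ≤ t → t ≤ T → S2 t = true → ∀ i,
      ContDiffOn ℝ 1 (g t i) (𝒳 t ×ˢ 𝒳 (t - 1)))
    -- the (possibly parameter-dependent) feasible sets
    (Xset : ℕ → EuclideanSpace ℝ (Fin n) → Set (EuclideanSpace ℝ (Fin n)))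
    (hXset : ∀ t x, Xset t x = if S2 t = true then
        {y ∈ 𝒳 t | A t y + B t x = b t ∧ ∀ i, g t i (y, x) ≤ 0}
      else 𝒳 t)
    -- (H1)-(d): relaxed feasibility on the `ε`-fattening of `𝒳 (t-1)`
    (hfeas : ∀ t, 1 ≤ t → t ≤ T → S2 t = true →
      ∀ x ∈ {x | ∃ u ∈ 𝒳 (t - 1), ‖x - u‖ ≤ ε},
        (Xset t x ∩ intrinsicInterior ℝ (𝒳 t)).Nonempty)
    -- the dynamic programming equations
    (Q : ℕ → EuclideanSpace ℝ (Fin n) → ℝ)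
    (hQT : ∀ x, Q (T + 1) x = 0)
    (hQ : ∀ t, 1 ≤ t → t ≤ T → ∀ x,
      Q t x = sInf ((fun y => f t (y, x) + Q (t + 1) y) '' Xset t x)) :
    ∀ t, 2 ≤ t → t ≤ T + 1 →
      ConvexOn ℝ (𝒳 (t - 1)) (Q t) ∧
      ∃ K : NNReal, LipschitzOnWith K (Q t) (𝒳 (t - 1)) :=
  stmt_10_general T 𝒳 h𝒳 S2 f g A B b ε hε hfconv hfC1 hgconv Xset hXset hfeas Q hQT hQ
end

section
/- Let $X \subset \mathbb{R}^m$, $Y \subset \mathbb{R}^n$ be nonempty compact convex sets, $f \in C^1(Y \times X)$ convex on $Y \times X$, and $(\mathcal{Q}^k)_{k \ge 1}$ a sequence of convex $L$-Lipschitz functions on $Y$ with $\underline{\mathcal{Q}} \le \mathcal{Q}^k \le \bar{\mathcal{Q}}$ for continuous $\underline{\mathcal{Q}}, \bar{\mathcal{Q}}$ on $Y$. Let $(x^k) \subset X$, $(\varepsilon^k) \subset \mathbb{R}_{\ge 0}$ with $\varepsilon^k \to 0$, and let $y^k \in Y$ be an $\varepsilon^k$-optimal solution of $\inf\{f(y,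 x^k) + \mathcal{Q}^k(y) : y \in Y\}$. Define $\eta^k = \max_{y \in Y} \big[\langle \nabla_y f(y^k, x^k), y^k - y\rangle + \mathcal{Q}^k(y^k) - \mathcal{Q}^k(y)\big]$. Then $\lim_{k \to \infty} \eta^k = 0$. -/
open Set Filter
open scoped RealInnerProductSpace Topology

/-!
Fix `k`, a competitor `z ∈ Y` and a step `t ∈ (0, 1]`, and put `w = y + t (z - y)`. Comparing the
`ε`-optimal point `y` with `w`, convexity of `Q` along the segment and the gradient inequality of
`f (·, x)` at `w` give `t (⟪∇_y f (w, x), y - z⟫ + Q y - Q z) ≤ ε`. Replacing `∇_y f (w, x)` by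
`∇_y f (y, x)` costs at most `‖∇_y f (y, x) - ∇_y f (w, x)‖ · diam Y`, which is small uniformly in
`k` once `t` is small, by uniform continuity of the partial gradient on the compact set `Y × X`.
So for every `ρ > 0` there is `t > 0` with `η k ≤ ε k / t + ρ` for all `k`.
-/

theorem ConvexOn.add_fderiv_sub_le_s11 {E : Type*} [NormedAddCommGroup E] [NormedSpace ℝ E]
    {s : Set E} {f : E → ℝ} {f' : E →L[ℝ] ℝ} {a b : E}
    (hf : ConvexOn ℝ s f) (ha : a ∈ s) (hb : b ∈ s) (hf' : HasFDerivAt f f' a) :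
    f a + f' (b - a) ≤ f b := by
  have hline : ConvexOn ℝ (Icc (0 : ℝ) 1) (f ∘ AffineMap.lineMap (k := ℝ) a b) :=
    (hf.comp_affineMap _).subset (fun t ht => hf.1.lineMap_mem ha hb ht) (convex_Icc 0 1)
  have hderiv : HasDerivAt (f ∘ AffineMap.lineMap (k := ℝ) a b) (f' (b - a)) 0 := by
    refine HasFDerivAt.comp_hasDerivAt _ ?_ AffineMap.hasDerivAt_lineMap
    simpa using hf'
  have := hline.le_slope_of_hasDerivAt (left_mem_Icc.2 zero_le_one)
    (right_mem_Icc.2 zero_le_one) zero_lt_one hderiv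
  simp only [slope_def_field, Function.comp_apply, AffineMap.lineMap_apply_zero,
    AffineMap.lineMap_apply_one, sub_zero, div_one] at this
  linarith

theorem optimality_gap_le_of_almost_minimizer {E : Type*} [NormedAddCommGroup E]
    [InnerProductSpace ℝ E] {s : Set E} {g Q : E → ℝ} {G : E → E}
    {y z : E} {t ε : ℝ} (hQ : ConvexOn ℝ s Q) (hy : y ∈ s) (hz : z ∈ s)
    (ht₀ : 0 < t) (ht₁ : t ≤ 1)
    (hgrad : g (y + t • (z - y)) + ⟪G (y + t • (z - y)), y - (y + t • (z - y))⟫ ≤ g y)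
    (hopt : g y + Q y ≤ g (y + t • (z - y)) + Q (y + t • (z - y)) + ε) :
    ⟪G y, y - z⟫ + Q y - Q z ≤ ε / t + ‖G y - G (y + t • (z - y))‖ * ‖y - z‖ := by
  set w := y + t • (z - y)
  have hQw : Q w ≤ (1 - t) * Q y + t * Q z := by
    have := hQ.2 hy hz (sub_nonneg.2 ht₁) ht₀.le (by ring)
    rwa [show (1 - t) • y + t • z = w by module] at this
  have hyw : y - w = t • (y - z) := by simp only [w]; module
  rw [hyw, real_inner_smul_right] at hgrad
  have hmain : t * (⟪G w, y - z⟫ + Q y - Q z) ≤ ε := by linarith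
  have hcs : ⟪G y - G w, y - z⟫ ≤ ‖G y - G w‖ * ‖y - z‖ := real_inner_le_norm _ _
  rw [inner_sub_left] at hcs
  have : ⟪G w, y - z⟫ + Q y - Q z ≤ ε / t := by rw [le_div_iff₀ ht₀]; linarith
  linarith

theorem IsCompact.exists_norm_sub_mul_norm_le {E F V : Type*} [NormedAddCommGroup E]
    [NormedSpace ℝ E] [PseudoMetricSpace F] [SeminormedAddCommGroup V]
    {s : Set E} {u : Set F} {G : E × F → V} (hs : IsCompact s) (hsc : Convex ℝ s)
    (hu : IsCompact u) (hG : ContinuousOn G (s ×ˢ u)) {ρ : ℝ} (hρ : 0 < ρ) :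
    ∃ t : ℝ, 0 < t ∧ t ≤ 1 ∧ ∀ y ∈ s, ∀ z ∈ s, ∀ x ∈ u,
      ‖G (y, x) - G (y + t • (z - y), x)‖ * ‖y - z‖ ≤ ρ := by
  set R := Metric.diam s
  have hR : 0 ≤ R := Metric.diam_nonneg
  have hdiam : ∀ y ∈ s, ∀ z ∈ s, ‖y - z‖ ≤ R := fun y hy z hz =>
    dist_eq_norm y z ▸ Metric.dist_le_diam_of_mem hs.isBounded hy hz
  obtain ⟨δ, hδ, hGδ⟩ := Metric.uniformContinuousOn_iff_le.mp
    ((hs.prod hu).uniformContinuousOn_of_continuous hG) (ρ / (R + 1)) (by positivity)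
  refine ⟨min 1 (δ / (R + 1)), by positivity, min_le_left _ _, fun y hy z hz x hx => ?_⟩
  set t := min 1 (δ / (R + 1))
  have hw : y + t • (z - y) ∈ s := hsc.add_smul_sub_mem hy hz ⟨by positivity, min_le_left _ _⟩
  have hclose : dist (y, x) (y + t • (z - y), x) ≤ δ := by
    rw [Prod.dist_eq, dist_self, dist_eq_norm, sub_add_cancel_left, norm_neg, norm_smul,
      Real.norm_of_nonneg (by positivity), norm_sub_rev]
    calc max (t * ‖y - z‖) 0 = t * ‖y - z‖ := max_eq_left (by positivity)
      _ ≤ δ / (R + 1) * R :=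
        mul_le_mul (min_le_right _ _) (hdiam y hy z hz) (norm_nonneg _) (by positivity)
      _ ≤ δ := by rw [div_mul_eq_mul_div, div_le_iff₀ (by positivity)]; nlinarith
  calc ‖G (y, x) - G (y + t • (z - y), x)‖ * ‖y - z‖ ≤ ρ / (R + 1) * R := by
        refine mul_le_mul ?_ (hdiam y hy z hz) (norm_nonneg _) (by positivity)
        rw [← dist_eq_norm]
        exact hGδ _ ⟨hy, hx⟩ _ ⟨hw, hx⟩ hclose
    _ ≤ ρ := by rw [div_mul_eq_mul_div, div_le_iff₀ (by positivity)]; nlinarith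

theorem tendsto_zero_of_le_mul_add {η ε : ℕ → ℝ} (hη : ∀ k, 0 ≤ η k)
    (hε : Tendsto ε atTop (𝓝 0)) (hle : ∀ ρ > 0, ∃ c, ∀ k, η k ≤ c * ε k + ρ) :
    Tendsto η atTop (𝓝 0) := by
  refine tendsto_order.2 ⟨fun a ha => .of_forall fun k => ha.trans_le (hη k), fun a ha => ?_⟩
  obtain ⟨c, hc⟩ := hle (a / 2) (half_pos ha)
  have hlim : Tendsto (fun k => c * ε k + a / 2) atTop (𝓝 (a / 2)) := by
    simpa using (hε.const_mul c).add_const (a / 2)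
  filter_upwards [hlim.eventually (gt_mem_nhds (half_lt_self ha))] with k hk
  exact (hc k).trans_lt hk

theorem stmt_11_general {n m : ℕ}
    (X : Set (EuclideanSpace ℝ (Fin m))) (Y : Set (EuclideanSpace ℝ (Fin n)))
    (hXcp : IsCompact X)
    (hYcv : Convex ℝ Y) (hYcp : IsCompact Y)
    (f : EuclideanSpace ℝ (Fin n) × EuclideanSpace ℝ (Fin m) → ℝ)
    (Gy : EuclideanSpace ℝ (Fin n) × EuclideanSpace ℝ (Fin m) → EuclideanSpace ℝ (Fin n))
    (Gx : EuclideanSpace ℝ (Fin n) × EuclideanSpace ℝ (Fin m) → EuclideanSpace ℝ (Fin m))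
    (D : EuclideanSpace ℝ (Fin n) × EuclideanSpace ℝ (Fin m) →
         EuclideanSpace ℝ (Fin n) × EuclideanSpace ℝ (Fin m) →L[ℝ] ℝ)
    (hconv : ConvexOn ℝ (Y ×ˢ X) f)
    (hdiff : ∀ z ∈ Y ×ˢ X, HasFDerivAt f (D z) z)
    (hgrad : ∀ z ∈ Y ×ˢ X, ∀ v, D z v = ⟪Gy z, v.1⟫ + ⟪Gx z, v.2⟫)
    (hC1 : ContinuousOn Gy (Y ×ˢ X))  -- `f ∈ C¹(Y × X)`
    -- the sequence of convex `L`-Lipschitz sandwiched functions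
    (L : NNReal) (Qk : ℕ → EuclideanSpace ℝ (Fin n) → ℝ)
    (hQkconv : ∀ k, ConvexOn ℝ Y (Qk k))
    -- the iterates
    (x : ℕ → EuclideanSpace ℝ (Fin m)) (hx : ∀ k, x k ∈ X)
    (εk : ℕ → ℝ) (hεk0 : Tendsto εk atTop (𝓝 0))
    (y : ℕ → EuclideanSpace ℝ (Fin n)) (hy : ∀ k, y k ∈ Y)
    (hyopt : ∀ k, ∀ z ∈ Y, f (y k, x k) + Qk k (y k) ≤ f (z, x k) + Qk k z + εk k)
    (η : ℕ → ℝ)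
    (hη : ∀ k, IsGreatest
      ((fun z => ⟪Gy (y k, x k), y k - z⟫ + Qk k (y k) - Qk k z) '' Y) (η k)) :
    Tendsto η atTop (𝓝 0) := by
  have hpartial : ∀ k, ∀ w ∈ Y, ∀ v ∈ Y, f (w, x k) + ⟪Gy (w, x k), v - w⟫ ≤ f (v, x k) := by
    intro k w hw v hv
    have hwx : (w, x k) ∈ Y ×ˢ X := ⟨hw, hx k⟩
    have := hconv.add_fderiv_sub_le_s11 hwx (b := (v, x k)) ⟨hv, hx k⟩ (hdiff _ hwx)
    rwa [hgrad _ hwx, Prod.mk_sub_mk, sub_self, inner_zero_right, add_zero] at this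
  refine tendsto_zero_of_le_mul_add (fun k => (hη k).2 ⟨y k, hy k, by simp⟩) hεk0 ?_
  intro ρ hρ
  obtain ⟨t, ht₀, ht₁, hG⟩ := hYcp.exists_norm_sub_mul_norm_le hYcv hXcp hC1 hρ
  refine ⟨t⁻¹, fun k => ?_⟩
  obtain ⟨z, hz, hzη⟩ := (hη k).1
  rw [← hzη]
  beta_reduce
  have hw : y k + t • (z - y k) ∈ Y := hYcv.add_smul_sub_mem (hy k) hz ⟨ht₀.le, ht₁⟩
  calc _ ≤ εk k / t + ‖Gy (y k, x k) - Gy (y k + t • (z - y k), x k)‖ * ‖y k - z‖ :=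
        optimality_gap_le_of_almost_minimizer (g := fun v => f (v, x k))
          (G := fun v => Gy (v, x k)) (hQkconv k) (hy k) hz ht₀ ht₁
          (hpartial k _ hw _ (hy k)) (hyopt k _ hw)
    _ ≤ t⁻¹ * εk k + ρ := by
        rw [div_eq_inv_mul]
        gcongr
        exact hG _ (hy k) _ hz _ (hx k)

/-- Vanishing-error lemma for fixed feasible sets (Proposition `propvanish1`). -/
theorem stmt_11 {n m : ℕ}
    (X : Set (EuclideanSpace ℝ (Fin m))) (Y : Set (EuclideanSpace ℝ (Fin n)))
    (hXne : X.Nonempty) (hXcv : Convex ℝ X) (hXcp : IsCompact X)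
    (hYne : Y.Nonempty) (hYcv : Convex ℝ Y) (hYcp : IsCompact Y)
    (f : EuclideanSpace ℝ (Fin n) × EuclideanSpace ℝ (Fin m) → ℝ)
    (Gy : EuclideanSpace ℝ (Fin n) × EuclideanSpace ℝ (Fin m) → EuclideanSpace ℝ (Fin n))
    (Gx : EuclideanSpace ℝ (Fin n) × EuclideanSpace ℝ (Fin m) → EuclideanSpace ℝ (Fin m))
    (D : EuclideanSpace ℝ (Fin n) × EuclideanSpace ℝ (Fin m) →
         EuclideanSpace ℝ (Fin n) × EuclideanSpace ℝ (Fin m) →L[ℝ] ℝ)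
    (hconv : ConvexOn ℝ (Y ×ˢ X) f)
    (hdiff : ∀ z ∈ Y ×ˢ X, HasFDerivAt f (D z) z)
    (hgrad : ∀ z ∈ Y ×ˢ X, ∀ v, D z v = ⟪Gy z, v.1⟫ + ⟪Gx z, v.2⟫)
    (hC1 : ContinuousOn Gy (Y ×ˢ X))  -- `f ∈ C¹(Y × X)`
    -- the sequence of convex `L`-Lipschitz sandwiched functions
    (L : NNReal) (Qk : ℕ → EuclideanSpace ℝ (Fin n) → ℝ)
    (hQkconv : ∀ k, ConvexOn ℝ Y (Qk k))
    (hQkLip : ∀ k, LipschitzOnWith L (Qk k) Y)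
    (Qlo Qhi : EuclideanSpace ℝ (Fin n) → ℝ)
    (hQlo : ContinuousOn Qlo Y) (hQhi : ContinuousOn Qhi Y)
    (hsand : ∀ k, ∀ y ∈ Y, Qlo y ≤ Qk k y ∧ Qk k y ≤ Qhi y)
    -- the iterates
    (x : ℕ → EuclideanSpace ℝ (Fin m)) (hx : ∀ k, x k ∈ X)
    (εk : ℕ → ℝ) (hεk : ∀ k, 0 ≤ εk k) (hεk0 : Tendsto εk atTop (𝓝 0))
    (y : ℕ → EuclideanSpace ℝ (Fin n)) (hy : ∀ k, y k ∈ Y)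
    (hyopt : ∀ k, ∀ z ∈ Y, f (y k, x k) + Qk k (y k) ≤ f (z, x k) + Qk k z + εk k)
    (η : ℕ → ℝ)
    (hη : ∀ k, IsGreatest
      ((fun z => ⟪Gy (y k, x k), y k - z⟫ + Qk k (y k) - Qk k z) '' Y) (η k)) :
    Tendsto η atTop (𝓝 0) :=
  stmt_11_general X Y hXcp hYcv hYcp f Gy Gx D hconv hdiff hgrad hC1 L Qk hQkconv x hx εk hεk0 y hy
    hyopt η hη
end

section
/- Let $Y \subset \mathbb{R}^n$, $X \subset \mathbb{R}^m$ be nonempty compact convex, $f \in C^1(Y \times X)$ convex, $g \in C^1(Y \times X)$ with convex components on $Y \times X^{\varepsilon}$ for some $\varepsilon > 0$, and assume there exist $\kappa, r > 0$ such that for all $x \in X$ there is $y \in Y$ with $\mathbb{B}_n(y,r) \cap \mathrm{Aff}(Y) \ne \emptyset$, $Ay + Bx = b$, and $g(y,x) < -\kappa\mathbf{e}$. Let $(\mathcal{Q}^k)$ be convex $L$-Lipschitz functions on $Y$ sandwiched between two continuous functions, $(x^k) \subset X$, $\varepsilon^k \to 0$, $y^k$ an $\varepsilon^k$-optimal feasible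 solution of $\inf\{f(y,x^k) + \mathcal{Q}^k(y) : y \in Y, Ay + Bx^k = b, g(y, x^k) \le 0\}$, and $(\lambda^k, \mu^k)$ an $\varepsilon^k$-optimal dual solution. Then $\eta^k := \max_{y \in Y}\big[\langle \nabla_y f(y^k, x^k) + A^T\lambda^k + \sum_i \mu^k(i)\nabla_y g_i(y^k, x^k), y^k - y\rangle + \mathcal{Q}^k(y^k) - \mathcal{Q}^k(y)\big] \to 0$ as $k \to \infty$. -/
open Set Filter Metric
open scoped RealInnerProductSpace Topology

/-!
Weak duality turns the `εᵏ`-optimal primal-dual pair into an approximate minimiser: `yᵏ` minimises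
the Lagrangian `ℓₖ = f(·, xᵏ) + Qᵏ + ⟪λᵏ, A· + Bxᵏ - b⟫ + ∑ μᵏᵢ gᵢ(·, xᵏ)` over `Y` up to `2εᵏ`.
Comparing `yᵏ` with `yᵏ + t (z - yᵏ)` and using convexity gives
`t ηᵏ ≤ 2εᵏ + t ‖∇ℓₖ(yᵏ + t (z - yᵏ)) - ∇ℓₖ(yᵏ)‖ diam Y`. The uniform Slater point bounds `∑ μᵏᵢ`
uniformly in `k`, so the gradients `∇ℓₖ` are uniformly equicontinuous on `Y`; taking `t` small and
then `k` large makes `ηᵏ` small.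
-/

theorem ContinuousOn.comp_prodMk_const {α β γ : Type*} [TopologicalSpace α]
    [TopologicalSpace β] [TopologicalSpace γ] {f : α × β → γ} {s : Set α} {t : Set β}
    (hf : ContinuousOn f (s ×ˢ t)) {b : β} (hb : b ∈ t) : ContinuousOn (fun a => f (a, b)) s :=
  hf.comp (by fun_prop : Continuous fun a => (a, b)).continuousOn fun _ ha => mk_mem_prod ha hb

theorem ConvexOn.le_sub_of_hasFDerivAt {E : Type*} [NormedAddCommGroup E] [NormedSpace ℝ E]
    {s : Set E} {f : E → ℝ} {f' : E →L[ℝ] ℝ} {x z : E} (hf : ConvexOn ℝ s f) (hx : x ∈ s)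
    (hz : z ∈ s) (hd : HasFDerivAt f f' x) : f' (z - x) ≤ f z - f x := by
  have hline : ConvexOn ℝ (AffineMap.lineMap x z ⁻¹' s) (f ∘ AffineMap.lineMap x z) :=
    hf.comp_affineMap _
  have hderiv : HasDerivAt (f ∘ AffineMap.lineMap x z) (f' (z - x)) (0 : ℝ) :=
    (by simpa using hd : HasFDerivAt f f' (AffineMap.lineMap x z (0 : ℝ))).comp_hasDerivAt 0
      AffineMap.hasDerivAt_lineMap
  simpa [slope_def_field] using
    hline.le_slope_of_hasDerivAt (by simpa) (by simpa) zero_lt_one hderiv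

theorem ConvexOn.inner_le_sub_of_hasFDerivAt_prod {E F : Type*} [NormedAddCommGroup E]
    [InnerProductSpace ℝ E] [NormedAddCommGroup F] [InnerProductSpace ℝ F]
    {s : Set (E × F)} {f : E × F → ℝ} {f' : E × F →L[ℝ] ℝ} {gy : E} {gx : F} {y z : E} {x : F}
    (hf : ConvexOn ℝ s f) (hz : (z, x) ∈ s) (hy : (y, x) ∈ s) (hd : HasFDerivAt f f' (z, x))
    (hgrad : ∀ v, f' v = ⟪gy, v.1⟫ + ⟪gx, v.2⟫) : ⟪gy, y - z⟫ ≤ f (y, x) - f (z, x) := by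
  simpa [hgrad] using hf.le_sub_of_hasFDerivAt hz hy hd

theorem inner_add_add_sum_smul_le {E ι : Type*} [NormedAddCommGroup E] [InnerProductSpace ℝ E]
    [Fintype ι] {Y : Set E} {φ ℓ : E → ℝ} {G : ι → E → ℝ} {gφ : E → E}
    {gℓ : E} {gG : ι → E → E} {mu : ι → ℝ} (hmu : ∀ i, 0 ≤ mu i) {y : E}
    (hφ : ∀ z ∈ Y, ⟪gφ z, y - z⟫ ≤ φ y - φ z) (hℓ : ∀ z, ⟪gℓ, y - z⟫ = ℓ y - ℓ z)
    (hG : ∀ i, ∀ z ∈ Y, ⟪gG i z, y - z⟫ ≤ G i y - G i z) :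
    ∀ z ∈ Y, ⟪gφ z + gℓ + ∑ i, mu i • gG i z, y - z⟫ ≤
      (φ y + ℓ y + ∑ i, mu i * G i y) - (φ z + ℓ z + ∑ i, mu i * G i z) := by
  intro z hz
  have hsum : ⟪∑ i, mu i • gG i z, y - z⟫ ≤ ∑ i, mu i * G i y - ∑ i, mu i * G i z := by
    rw [sum_inner, ← Finset.sum_sub_distrib]
    refine Finset.sum_le_sum fun i _ => ?_
    rw [real_inner_smul_left, ← mul_sub]
    exact mul_le_mul_of_nonneg_left (hG i z hz) (hmu i)
  rw [inner_add_left, inner_add_left]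
  linarith [hφ z hz, hℓ z]

theorem gap_le_of_approx_min {E : Type*} [NormedAddCommGroup E] [InnerProductSpace ℝ E]
    {Y : Set E} (hY : Convex ℝ Y) {φ Q : E → ℝ} {Γ : E → E} {y : E} {e : ℝ}
    (hφ : ∀ z ∈ Y, ⟪Γ z, y - z⟫ ≤ φ y - φ z) (hQ : ConvexOn ℝ Y Q) (hy : y ∈ Y)
    (hmin : ∀ z ∈ Y, φ y + Q y ≤ φ z + Q z + e) {z : E} (hz : z ∈ Y) {t : ℝ} (ht0 : 0 < t)
    (ht1 : t ≤ 1) :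
    ⟪Γ y, y - z⟫ + Q y - Q z ≤ e / t + ‖Γ (y + t • (z - y)) - Γ y‖ * ‖z - y‖ := by
  set w := z - y
  have hcomb : (1 - t) • y + t • z = y + t • w := by
    simp only [w, smul_sub, sub_smul, one_smul]; abel
  have hwY : y + t • w ∈ Y := hcomb ▸ hY hy hz (sub_nonneg.2 ht1) ht0.le (sub_add_cancel 1 t)
  have hQw : Q (y + t • w) ≤ (1 - t) * Q y + t * Q z := by
    simpa [hcomb] using hQ.2 hy hz (sub_nonneg.2 ht1) ht0.le (sub_add_cancel 1 t)
  have hφw := hφ _ hwY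
  rw [show y - (y + t • w) = -(t • w) by abel, inner_neg_right, real_inner_smul_right] at hφw
  have hcs : ⟪Γ (y + t • w), w⟫ - ⟪Γ y, w⟫ ≤ ‖Γ (y + t • w) - Γ y‖ * ‖w‖ :=
    inner_sub_left (𝕜 := ℝ) (Γ (y + t • w)) (Γ y) w ▸ real_inner_le_norm _ _
  rw [show y - z = -w by simp [w], inner_neg_right, div_add' _ _ _ ht0.ne', le_div_iff₀ ht0]
  linarith [hmin _ hwY, mul_le_mul_of_nonneg_left hcs ht0.le]

section Lagrangian

variable {E E' ι : Type*} [NormedAddCommGroup E'] [InnerProductSpace ℝ E'] [Fintype ι]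
  {Y : Set E} {F₀ : E → ℝ} {G : ι → E → ℝ} {a : E → E'} {b lam : E'} {mu : ι → ℝ}
  {v e : ℝ}

theorem lagrangian_le_add_of_approx_opt (hmu : ∀ i, 0 ≤ mu i)
    (hv : IsGLB (F₀ '' {z ∈ Y | a z = b ∧ ∀ i, G i z ≤ 0}) v)
    (hdual : ∀ z ∈ Y, v - e ≤ F₀ z + ⟪lam, a z - b⟫ + ∑ i, mu i * G i z) {y : E}
    (hyfeas : a y = b ∧ ∀ i, G i y ≤ 0)
    (hyopt : ∀ z ∈ Y, (a z = b ∧ ∀ i, G i z ≤ 0) → F₀ y ≤ F₀ z + e) :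
    ∀ z ∈ Y, F₀ y + ⟪lam, a y - b⟫ + ∑ i, mu i * G i y ≤
      F₀ z + ⟪lam, a z - b⟫ + ∑ i, mu i * G i z + 2 * e := by
  intro z hz
  have hyv : F₀ y - e ≤ v := hv.2 <| by
    rintro _ ⟨w, ⟨hw, hwfeas⟩, rfl⟩
    linarith [hyopt w hw hwfeas]
  have hcompl : ∑ i, mu i * G i y ≤ 0 :=
    Finset.sum_nonpos fun i _ => mul_nonpos_of_nonneg_of_nonpos (hmu i) (hyfeas.2 i)
  rw [hyfeas.1, sub_self, inner_zero_right]
  linarith [hdual z hz]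

theorem mul_sum_le_of_slater {κ m C : ℝ} (hmu : ∀ i, 0 ≤ mu i)
    (hv : IsGLB (F₀ '' {z ∈ Y | a z = b ∧ ∀ i, G i z ≤ 0}) v)
    (hdual : ∀ z ∈ Y, v - e ≤ F₀ z + ⟪lam, a z - b⟫ + ∑ i, mu i * G i z)
    (hm : ∀ z ∈ Y, m ≤ F₀ z) {w : E} (hw : w ∈ Y) (hwC : F₀ w ≤ C) (hwa : a w = b)
    (hwG : ∀ i, G i w < -κ) :
    κ * ∑ i, mu i ≤ C - m + e := by
  have hmv : m ≤ v := hv.2 <| by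
    rintro _ ⟨z, ⟨hz, -⟩, rfl⟩
    exact hm z hz
  have hslater : ∑ i, mu i * G i w ≤ -(κ * ∑ i, mu i) := by
    rw [Finset.mul_sum, ← Finset.sum_neg_distrib]
    exact Finset.sum_le_sum fun i _ => by nlinarith [hmu i, hwG i]
  have := hdual w hw
  rw [hwa, sub_self, inner_zero_right] at this
  linarith

end Lagrangian

theorem Metric.uniformEquicontinuousOn_iff {ι α β : Type*} [PseudoMetricSpace α]
    [PseudoMetricSpace β] {F : ι → β → α} {S : Set β} :
    UniformEquicontinuousOn F S ↔ ∀ ε > 0, ∃ δ > 0, ∀ x ∈ S, ∀ y ∈ S, dist x y < δ →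
      ∀ i, dist (F i x) (F i y) < ε := by
  rw [(uniformity_basis_dist.inf_principal (S ×ˢ S)).uniformEquicontinuousOn_iff
    uniformity_basis_dist]
  simp only [mem_inter_iff, mem_ofPred_eq, mem_prod]
  grind

theorem uniformEquicontinuousOn_add_add_sum_smul {E F G ι ι' : Type*} [PseudoMetricSpace E]
    [PseudoMetricSpace F] [SeminormedAddCommGroup G] [NormedSpace ℝ G] [Fintype ι]
    {Y : Set E} {X : Set F} (hYX : IsCompact (Y ×ˢ X)) {a : E × F → G} {b : ι → E × F → G}
    (ha : ContinuousOn a (Y ×ˢ X)) (hb : ∀ i, ContinuousOn (b i) (Y ×ˢ X)) {x : ι' → F}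
    (hx : ∀ k, x k ∈ X) (c : ι' → G) {mu : ι' → ι → ℝ} (hmu : ∀ k i, 0 ≤ mu k i) {M : ℝ}
    (hM : ∀ k, ∑ i, mu k i ≤ M) :
    UniformEquicontinuousOn (fun k z => a (z, x k) + c k + ∑ i, mu k i • b i (z, x k)) Y := by
  set H : E × F → G × (ι → G) := fun p => (a p, fun i => b i p)
  have hH : UniformContinuousOn H (Y ×ˢ X) :=
    hYX.uniformContinuousOn_of_continuous (ha.prodMk (continuousOn_pi.2 hb))
  rw [Metric.uniformEquicontinuousOn_iff]
  intro δ hδ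
  obtain ⟨ρ, hρ, hHρ⟩ := Metric.uniformContinuousOn_iff.1 hH (δ / (1 + max M 0)) (by positivity)
  refine ⟨ρ, hρ, fun u hu w hw huw k => ?_⟩
  set d := dist (H (u, x k)) (H (w, x k))
  have hd : d < δ / (1 + max M 0) :=
    hHρ _ (mk_mem_prod hu (hx k)) _ (mk_mem_prod hw (hx k)) (by simpa [Prod.dist_eq] using huw)
  have hda : dist (a (u, x k)) (a (w, x k)) ≤ d := le_max_left _ _
  have hdb : ∀ i, dist (b i (u, x k)) (b i (w, x k)) ≤ d := fun i =>
    (dist_le_pi_dist (H (u, x k)).2 (H (w, x k)).2 i).trans (le_max_right _ _)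
  calc dist (a (u, x k) + c k + ∑ i, mu k i • b i (u, x k))
        (a (w, x k) + c k + ∑ i, mu k i • b i (w, x k))
      ≤ dist (a (u, x k)) (a (w, x k)) + ∑ i, mu k i * dist (b i (u, x k)) (b i (w, x k)) := by
        refine (dist_add_add_le _ _ _ _).trans (add_le_add (by rw [dist_add_right]) ?_)
        refine (dist_sum_sum_le _ _ _).trans (Finset.sum_le_sum fun i _ => ?_)
        rw [dist_smul₀, Real.norm_of_nonneg (hmu k i)]
    _ ≤ d + ∑ i, mu k i * d :=
        add_le_add hda (Finset.sum_le_sum fun i _ => mul_le_mul_of_nonneg_left (hdb i) (hmu k i))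
    _ ≤ (1 + max M 0) * d := by
        rw [← Finset.sum_mul]
        nlinarith [hM k, le_max_left M 0, dist_nonneg (x := H (u, x k)) (y := H (w, x k))]
    _ < δ := by
        rwa [lt_div_iff₀' (by positivity)] at hd

theorem tendsto_zero_of_le_gap {E G : Type*} [NormedAddCommGroup E] [NormedSpace ℝ E]
    [SeminormedAddCommGroup G] {Y : Set E} (hY : Convex ℝ Y) (hYb : Bornology.IsBounded Y)
    {Γ : ℕ → E → G} (hΓ : UniformEquicontinuousOn Γ Y) {y : ℕ → E} (hy : ∀ k, y k ∈ Y)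
    {e η : ℕ → ℝ} (he : Tendsto e atTop (𝓝 0)) (hη0 : ∀ k, 0 ≤ η k)
    (hη : ∀ k, ∃ z ∈ Y, ∀ t : ℝ, 0 < t → t ≤ 1 →
      η k ≤ e k / t + ‖Γ k (y k + t • (z - y k)) - Γ k (y k)‖ * ‖z - y k‖) :
    Tendsto η atTop (𝓝 0) := by
  obtain ⟨D, hD⟩ := Metric.isBounded_iff.1 hYb
  rw [Metric.uniformEquicontinuousOn_iff] at hΓ
  refine tendsto_order.2 ⟨fun δ hδ => .of_forall fun k => hδ.trans_le (hη0 k), fun δ hδ => ?_⟩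
  set D' := |D| + 1
  obtain ⟨ρ, hρ, hΓρ⟩ := hΓ (δ / (2 * D')) (by positivity)
  set t := min 1 (ρ / D')
  have ht0 : 0 < t := lt_min one_pos (by positivity)
  have hgap : ∀ k, ∀ z ∈ Y, ‖Γ k (y k + t • (z - y k)) - Γ k (y k)‖ * ‖z - y k‖ ≤ δ / 2 := by
    intro k z hz
    have hzy : ‖z - y k‖ ≤ |D| := dist_eq_norm z (y k) ▸ (hD hz (hy k)).trans (le_abs_self D)
    have hstep : dist (y k + t • (z - y k)) (y k) < ρ := by
      rw [dist_eq_norm, add_sub_cancel_left, norm_smul, Real.norm_of_nonneg ht0.le]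
      calc t * ‖z - y k‖ ≤ ρ / D' * |D| :=
            mul_le_mul (min_le_right _ _) hzy (norm_nonneg _) (by positivity)
        _ < ρ := by rw [div_mul_eq_mul_div, div_lt_iff₀ (by positivity)]; nlinarith
    have hΓk := hΓρ _ (hY.add_smul_sub_mem (hy k) hz ⟨ht0.le, min_le_left _ _⟩) _ (hy k) hstep k
    rw [dist_eq_norm] at hΓk
    calc ‖Γ k (y k + t • (z - y k)) - Γ k (y k)‖ * ‖z - y k‖ ≤ δ / (2 * D') * D' :=
          mul_le_mul hΓk.le (by linarith) (norm_nonneg _) (by positivity)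
      _ = δ / 2 := by field_simp [(by positivity : D' ≠ 0)]
  filter_upwards [he.eventually (gt_mem_nhds (by positivity : 0 < t * (δ / 2)))] with k hk
  obtain ⟨z, hz, hηz⟩ := hη k
  have het : e k / t < δ / 2 := by rwa [div_lt_iff₀ ht0, mul_comm]
  linarith [hηz t ht0 (min_le_left _ _), hgap k z hz]

theorem stmt_12_general {n m q p : ℕ}
    (X : Set (EuclideanSpace ℝ (Fin m))) (Y : Set (EuclideanSpace ℝ (Fin n)))
    (hXcp : IsCompact X)
    (hYcv : Convex ℝ Y) (hYcp : IsCompact Y)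
    (f : EuclideanSpace ℝ (Fin n) × EuclideanSpace ℝ (Fin m) → ℝ)
    (Gfy : EuclideanSpace ℝ (Fin n) × EuclideanSpace ℝ (Fin m) → EuclideanSpace ℝ (Fin n))
    (Gfx : EuclideanSpace ℝ (Fin n) × EuclideanSpace ℝ (Fin m) → EuclideanSpace ℝ (Fin m))
    (Df : EuclideanSpace ℝ (Fin n) × EuclideanSpace ℝ (Fin m) →
          EuclideanSpace ℝ (Fin n) × EuclideanSpace ℝ (Fin m) →L[ℝ] ℝ)
    (hfconv : ConvexOn ℝ (Y ×ˢ X) f)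
    (hfdiff : ∀ z ∈ Y ×ˢ X, HasFDerivAt f (Df z) z)
    (hfgrad : ∀ z ∈ Y ×ˢ X, ∀ v, Df z v = ⟪Gfy z, v.1⟫ + ⟪Gfx z, v.2⟫)
    (hfC1 : ContinuousOn Gfy (Y ×ˢ X))
    (g : Fin p → EuclideanSpace ℝ (Fin n) × EuclideanSpace ℝ (Fin m) → ℝ)
    (Ggy : Fin p → EuclideanSpace ℝ (Fin n) × EuclideanSpace ℝ (Fin m) →
      EuclideanSpace ℝ (Fin n))
    (Ggx : Fin p → EuclideanSpace ℝ (Fin n) × EuclideanSpace ℝ (Fin m) →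
      EuclideanSpace ℝ (Fin m))
    (Dg : Fin p → EuclideanSpace ℝ (Fin n) × EuclideanSpace ℝ (Fin m) →
          EuclideanSpace ℝ (Fin n) × EuclideanSpace ℝ (Fin m) →L[ℝ] ℝ)
    (ε : ℝ) (hεpos : 0 < ε)
    (hgconv : ∀ i, ConvexOn ℝ (Y ×ˢ {x | ∃ u ∈ X, ‖x - u‖ ≤ ε}) (g i))
    (hgdiff : ∀ i, ∀ z ∈ Y ×ˢ X, HasFDerivAt (g i) (Dg i z) z)
    (hggrad : ∀ i, ∀ z ∈ Y ×ˢ X, ∀ v, Dg i z v = ⟪Ggy i z, v.1⟫ + ⟪Ggx i z, v.2⟫)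
    (hgC1 : ∀ i, ContinuousOn (Ggy i) (Y ×ˢ X))
    (A : EuclideanSpace ℝ (Fin n) →L[ℝ] EuclideanSpace ℝ (Fin q))
    (B : EuclideanSpace ℝ (Fin m) →L[ℝ] EuclideanSpace ℝ (Fin q))
    (b : EuclideanSpace ℝ (Fin q))
    -- the uniform Slater assumption (H)
    (κ r : ℝ) (hκ : 0 < κ)
    (hslater : ∀ x ∈ X, ∃ y ∈ Y,
      (closedBall y r ∩ (affineSpan ℝ Y : Set (EuclideanSpace ℝ (Fin n)))).Nonempty ∧
      A y + B x = b ∧ ∀ i, g i (y, x) < -κ)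
    -- the sequence of convex `L`-Lipschitz sandwiched functions
    (L : NNReal) (Qk : ℕ → EuclideanSpace ℝ (Fin n) → ℝ)
    (hQkconv : ∀ k, ConvexOn ℝ Y (Qk k))
    (hQkLip : ∀ k, LipschitzOnWith L (Qk k) Y)
    (Qlo Qhi : EuclideanSpace ℝ (Fin n) → ℝ)
    (hQlo : ContinuousOn Qlo Y) (hQhi : ContinuousOn Qhi Y)
    (hsand : ∀ k, ∀ y ∈ Y, Qlo y ≤ Qk k y ∧ Qk k y ≤ Qhi y)
    -- the iterates
    (x : ℕ → EuclideanSpace ℝ (Fin m)) (hx : ∀ k, x k ∈ X)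
    (εk : ℕ → ℝ) (hεk0 : Tendsto εk atTop (𝓝 0))
    -- `ε^k`-optimal feasible primal solutions
    (y : ℕ → EuclideanSpace ℝ (Fin n)) (hy : ∀ k, y k ∈ Y)
    (hyfeas : ∀ k, A (y k) + B (x k) = b ∧ ∀ i, g i (y k, x k) ≤ 0)
    (hyopt : ∀ k, ∀ z ∈ Y, (A z + B (x k) = b ∧ ∀ i, g i (z, x k) ≤ 0) →
      f (y k, x k) + Qk k (y k) ≤ f (z, x k) + Qk k z + εk k)
    -- primal optimal values and `ε^k`-optimal feasible dual solutions
    (v : ℕ → ℝ)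
    (hv : ∀ k, IsGLB ((fun z => f (z, x k) + Qk k z) ''
      {z ∈ Y | A z + B (x k) = b ∧ ∀ i, g i (z, x k) ≤ 0}) (v k))
    (h : ℕ → EuclideanSpace ℝ (Fin q) → (Fin p → ℝ) → ℝ)
    (hh : ∀ k lam mu, h k lam mu = sInf ((fun z => f (z, x k) + Qk k z +
      ⟪lam, A z + B (x k) - b⟫ + ∑ i, mu i * g i (z, x k)) '' Y))
    (lam : ℕ → EuclideanSpace ℝ (Fin q)) (mu : ℕ → Fin p → ℝ)
    (hmu : ∀ k i, 0 ≤ mu k i)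
    (hdualopt : ∀ k, h k (lam k) (mu k) ≥ v k - εk k)
    -- the optimality-gap quantities
    (η : ℕ → ℝ)
    (hη : ∀ k, IsGreatest ((fun z =>
      ⟪Gfy (y k, x k) + (ContinuousLinearMap.adjoint A) (lam k)
        + ∑ i, mu k i • Ggy i (y k, x k), y k - z⟫
      + Qk k (y k) - Qk k z) '' Y) (η k)) :
    Tendsto η atTop (𝓝 0) := by
  have hYX : IsCompact (Y ×ˢ X) := hYcp.prod hXcp
  have hfcont : ContinuousOn f (Y ×ˢ X) := fun z hz =>
    (hfdiff z hz).continuousAt.continuousWithinAt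
  have hgcont : ∀ i, ContinuousOn (g i) (Y ×ˢ X) := fun i z hz =>
    (hgdiff i z hz).continuousAt.continuousWithinAt
  have hdual : ∀ k, ∀ z ∈ Y, v k - εk k ≤ f (z, x k) + Qk k z + ⟪lam k, A z + B (x k) - b⟫
      + ∑ i, mu k i * g i (z, x k) := by
    intro k z hz
    have hcont : ContinuousOn (fun z => f (z, x k) + Qk k z + ⟪lam k, A z + B (x k) - b⟫
        + ∑ i, mu k i * g i (z, x k)) Y :=
      (((hfcont.comp_prodMk_const (hx k)).add (hQkLip k).continuousOn).add (by fun_prop)).add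
        (continuousOn_finsetSum _ fun i _ =>
          continuousOn_const.mul ((hgcont i).comp_prodMk_const (hx k)))
    exact (hh k _ _ ▸ hdualopt k).trans
      (csInf_le (hYcp.bddBelow_image hcont) (mem_image_of_mem _ hz))
  obtain ⟨M, hM⟩ : ∃ M, ∀ k, ∑ i, mu k i ≤ M := by
    obtain ⟨Cu, hCu⟩ :=
      hYX.bddAbove_image (hfcont.add (hQhi.comp continuousOn_fst fun p hp => hp.1))
    obtain ⟨Cl, hCl⟩ :=
      hYX.bddBelow_image (hfcont.add (hQlo.comp continuousOn_fst fun p hp => hp.1))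
    obtain ⟨Ce, hCe⟩ := hεk0.bddAbove_range
    refine ⟨(Cu - Cl + Ce) / κ, fun k => ?_⟩
    obtain ⟨w, hw, -, hwA, hwg⟩ := hslater (x k) (hx k)
    have := mul_sum_le_of_slater (hmu k) (hv k) (hdual k) (m := Cl) (C := Cu)
      (fun z hz => (hCl ⟨(z, x k), mk_mem_prod hz (hx k), rfl⟩).trans
        (add_le_add le_rfl (hsand k z hz).1))
      hw ((add_le_add le_rfl (hsand k w hw).2).trans
        (hCu ⟨(w, x k), mk_mem_prod hw (hx k), rfl⟩)) hwA hwg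
    rw [le_div_iff₀ hκ]
    linarith [hCe ⟨k, rfl⟩]
  have hmin k := lagrangian_le_add_of_approx_opt (hmu k) (hv k) (hdual k) (hyfeas k) (hyopt k)
  have hXε : ∀ k, x k ∈ {x | ∃ u ∈ X, ‖x - u‖ ≤ ε} := fun k =>
    ⟨x k, hx k, by simpa using hεpos.le⟩
  have hlin : ∀ k z, ⟪ContinuousLinearMap.adjoint A (lam k), y k - z⟫ =
      ⟪lam k, A (y k) + B (x k) - b⟫ - ⟪lam k, A z + B (x k) - b⟫ := fun k z => by
    rw [ContinuousLinearMap.adjoint_inner_left, ← inner_sub_right, map_sub]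
    congr 1
    abel
  have hgrad k := inner_add_add_sum_smul_le (hmu k) (y := y k) (φ := fun z => f (z, x k))
    (ℓ := fun z => ⟪lam k, A z + B (x k) - b⟫) (G := fun i z => g i (z, x k))
    (fun z hz => hfconv.inner_le_sub_of_hasFDerivAt_prod (mk_mem_prod hz (hx k))
      (mk_mem_prod (hy k) (hx k)) (hfdiff _ (mk_mem_prod hz (hx k)))
      (hfgrad _ (mk_mem_prod hz (hx k))))
    (hlin k)
    (fun i z hz => (hgconv i).inner_le_sub_of_hasFDerivAt_prod (mk_mem_prod hz (hXε k))
      (mk_mem_prod (hy k) (hXε k)) (hgdiff i _ (mk_mem_prod hz (hx k)))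
      (hggrad i _ (mk_mem_prod hz (hx k))))
  have hΓ := uniformEquicontinuousOn_add_add_sum_smul hYX hfC1 hgC1 hx
    (fun k => ContinuousLinearMap.adjoint A (lam k)) hmu hM
  refine tendsto_zero_of_le_gap hYcv hYcp.isBounded hΓ hy (e := fun k => 2 * εk k)
    (by simpa using hεk0.const_mul 2) (fun k => (hη k).2 ⟨y k, hy k, by simp⟩) fun k => ?_
  obtain ⟨z, hz, hηz⟩ := (hη k).1
  refine ⟨z, hz, fun t ht0 ht1 => ?_⟩
  rw [← hηz]
  exact gap_le_of_approx_min hYcv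
    (φ := fun z => f (z, x k) + ⟪lam k, A z + B (x k) - b⟫ + ∑ i, mu k i * g i (z, x k))
    (Γ := fun z => Gfy (z, x k) + ContinuousLinearMap.adjoint A (lam k)
      + ∑ i, mu k i • Ggy i (z, x k))
    (hgrad k) (hQkconv k) (hy k) (fun w hw => by linarith [hmin k w hw]) hz ht0 ht1

/-- Vanishing-error lemma for variable feasible sets, dual version
(Proposition `propvanish1dual`). -/
theorem stmt_12 {n m q p : ℕ}
    (X : Set (EuclideanSpace ℝ (Fin m))) (Y : Set (EuclideanSpace ℝ (Fin n)))
    (hXne : X.Nonempty) (hXcv : Convex ℝ X) (hXcp : IsCompact X)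
    (hYne : Y.Nonempty) (hYcv : Convex ℝ Y) (hYcp : IsCompact Y)
    (f : EuclideanSpace ℝ (Fin n) × EuclideanSpace ℝ (Fin m) → ℝ)
    (Gfy : EuclideanSpace ℝ (Fin n) × EuclideanSpace ℝ (Fin m) → EuclideanSpace ℝ (Fin n))
    (Gfx : EuclideanSpace ℝ (Fin n) × EuclideanSpace ℝ (Fin m) → EuclideanSpace ℝ (Fin m))
    (Df : EuclideanSpace ℝ (Fin n) × EuclideanSpace ℝ (Fin m) →
          EuclideanSpace ℝ (Fin n) × EuclideanSpace ℝ (Fin m) →L[ℝ] ℝ)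
    (hfconv : ConvexOn ℝ (Y ×ˢ X) f)
    (hfdiff : ∀ z ∈ Y ×ˢ X, HasFDerivAt f (Df z) z)
    (hfgrad : ∀ z ∈ Y ×ˢ X, ∀ v, Df z v = ⟪Gfy z, v.1⟫ + ⟪Gfx z, v.2⟫)
    (hfC1 : ContinuousOn Gfy (Y ×ˢ X))
    (g : Fin p → EuclideanSpace ℝ (Fin n) × EuclideanSpace ℝ (Fin m) → ℝ)
    (Ggy : Fin p → EuclideanSpace ℝ (Fin n) × EuclideanSpace ℝ (Fin m) →
      EuclideanSpace ℝ (Fin n))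
    (Ggx : Fin p → EuclideanSpace ℝ (Fin n) × EuclideanSpace ℝ (Fin m) →
      EuclideanSpace ℝ (Fin m))
    (Dg : Fin p → EuclideanSpace ℝ (Fin n) × EuclideanSpace ℝ (Fin m) →
          EuclideanSpace ℝ (Fin n) × EuclideanSpace ℝ (Fin m) →L[ℝ] ℝ)
    (ε : ℝ) (hεpos : 0 < ε)
    (hgconv : ∀ i, ConvexOn ℝ (Y ×ˢ {x | ∃ u ∈ X, ‖x - u‖ ≤ ε}) (g i))
    (hgdiff : ∀ i, ∀ z ∈ Y ×ˢ X, HasFDerivAt (g i) (Dg i z) z)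
    (hggrad : ∀ i, ∀ z ∈ Y ×ˢ X, ∀ v, Dg i z v = ⟪Ggy i z, v.1⟫ + ⟪Ggx i z, v.2⟫)
    (hgC1 : ∀ i, ContinuousOn (Ggy i) (Y ×ˢ X))
    (A : EuclideanSpace ℝ (Fin n) →L[ℝ] EuclideanSpace ℝ (Fin q))
    (B : EuclideanSpace ℝ (Fin m) →L[ℝ] EuclideanSpace ℝ (Fin q))
    (b : EuclideanSpace ℝ (Fin q))
    -- the uniform Slater assumption (H)
    (κ r : ℝ) (hκ : 0 < κ) (hr : 0 < r)
    (hslater : ∀ x ∈ X, ∃ y ∈ Y,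
      (closedBall y r ∩ (affineSpan ℝ Y : Set (EuclideanSpace ℝ (Fin n)))).Nonempty ∧
      A y + B x = b ∧ ∀ i, g i (y, x) < -κ)
    -- the sequence of convex `L`-Lipschitz sandwiched functions
    (L : NNReal) (Qk : ℕ → EuclideanSpace ℝ (Fin n) → ℝ)
    (hQkconv : ∀ k, ConvexOn ℝ Y (Qk k))
    (hQkLip : ∀ k, LipschitzOnWith L (Qk k) Y)
    (Qlo Qhi : EuclideanSpace ℝ (Fin n) → ℝ)
    (hQlo : ContinuousOn Qlo Y) (hQhi : ContinuousOn Qhi Y)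
    (hsand : ∀ k, ∀ y ∈ Y, Qlo y ≤ Qk k y ∧ Qk k y ≤ Qhi y)
    -- the iterates
    (x : ℕ → EuclideanSpace ℝ (Fin m)) (hx : ∀ k, x k ∈ X)
    (εk : ℕ → ℝ) (hεk : ∀ k, 0 ≤ εk k) (hεk0 : Tendsto εk atTop (𝓝 0))
    -- `ε^k`-optimal feasible primal solutions
    (y : ℕ → EuclideanSpace ℝ (Fin n)) (hy : ∀ k, y k ∈ Y)
    (hyfeas : ∀ k, A (y k) + B (x k) = b ∧ ∀ i, g i (y k, x k) ≤ 0)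
    (hyopt : ∀ k, ∀ z ∈ Y, (A z + B (x k) = b ∧ ∀ i, g i (z, x k) ≤ 0) →
      f (y k, x k) + Qk k (y k) ≤ f (z, x k) + Qk k z + εk k)
    -- primal optimal values and `ε^k`-optimal feasible dual solutions
    (v : ℕ → ℝ)
    (hv : ∀ k, IsGLB ((fun z => f (z, x k) + Qk k z) ''
      {z ∈ Y | A z + B (x k) = b ∧ ∀ i, g i (z, x k) ≤ 0}) (v k))
    (h : ℕ → EuclideanSpace ℝ (Fin q) → (Fin p → ℝ) → ℝ)
    (hh : ∀ k lam mu, h k lam mu = sInf ((fun z => f (z, x k) + Qk k z +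
      ⟪lam, A z + B (x k) - b⟫ + ∑ i, mu i * g i (z, x k)) '' Y))
    (lam : ℕ → EuclideanSpace ℝ (Fin q)) (mu : ℕ → Fin p → ℝ)
    (hlamfeas : ∀ k, ∃ z ∈ (affineSpan ℝ Y : Set (EuclideanSpace ℝ (Fin n))),
      lam k = A z + B (x k) - b)
    (hmu : ∀ k i, 0 ≤ mu k i)
    (hdualopt : ∀ k, h k (lam k) (mu k) ≥ v k - εk k)
    -- the optimality-gap quantities
    (η : ℕ → ℝ)
    (hη : ∀ k, IsGreatest ((fun z =>
      ⟪Gfy (y k, x k) + (ContinuousLinearMap.adjoint A) (lam k)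
        + ∑ i, mu k i • Ggy i (y k, x k), y k - z⟫
      + Qk k (y k) - Qk k z) '' Y) (η k)) :
    Tendsto η atTop (𝓝 0) :=
  stmt_12_general X Y hXcp hYcv hYcp f Gfy Gfx Df hfconv hfdiff hfgrad hfC1 g Ggy Ggx Dg ε hεpos
    hgconv hgdiff hggrad hgC1 A B b κ r hκ hslater L Qk hQkconv hQkLip Qlo Qhi hQlo hQhi hsand x hx
    εk hεk0 y hy hyfeas hyopt v hv h hh lam mu hmu hdualopt η hη
end
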